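/- arXiv:1709.03929 — 7 statements merged into one kernel-verified Lean document; each statement's English description precedes it below -/
import Mathlib

section
/- Let P be a module over the Weyl algebra 𝒦_n over the Laurent polynomial algebra A_n, and let V be an 𝔰𝔩_n(ℂ)-module. Then the formula D(u,r)·(z ⊗ y) = (D(u,r)z) ⊗ y + (x^r z) ⊗ ((r uᵀ) y), for u ∈ ℂ^n, r ∈ ℤ^n with ⟨u,r⟩ = 0, defines a Lie algebra action of 𝕊_n on P ⊗ V, i.e., [D(u,r), D(v,s)]·(z⊗y) = D(u,r)·(D(v,s)·(z⊗y)) − D(v,s)·(D(u,r)·(z⊗y)). -/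
/-- A module over the Weyl algebra `𝒦ₙ` of the Laurent polynomial algebra
`Aₙ = ℂ[x₁^{±1},...,xₙ^{±1}]`: the data of commuting multiplication operators `X r`
(by the monomials `x^r`, `r ∈ ℤⁿ`) and degree-derivation operators `pd i = xᵢ∂/∂xᵢ`,
subject to the defining relations of `𝒦ₙ`. -/
structure WeylModule (n : ℕ) (P : Type*) [AddCommGroup P] [Module ℂ P] where
  X : (Fin n → ℤ) → Module.End ℂ P
  pd : Fin n → Module.End ℂ P
  X_zero : X 0 = 1
  X_add : ∀ r s, X (r + s) = X r * X s
  pd_comm : ∀ i j, pd i * pd j = pd j * pd i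
  pd_X : ∀ i r, pd i * X r = X r * (pd i + (r i : ℂ) • 1)

/-- The pairing `⟨u, s⟩ = ∑ i, u i * s i`. -/
noncomputable def pairing {n : ℕ} (u : Fin n → ℂ) (s : Fin n → ℤ) : ℂ := ∑ i, u i * (s i : ℂ)

namespace WeylModule

variable {n : ℕ} {P : Type*} [AddCommGroup P] [Module ℂ P]

/-- The operator `D(u,r) = x^r ∑ᵢ uᵢ ∂ᵢ ∈ 𝒦ₙ` acting on `P`. -/
noncomputable def D (K : WeylModule n P) (u : Fin n → ℂ) (r : Fin n → ℤ) : Module.End ℂ P :=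
  K.X r * ∑ i, u i • K.pd i

end WeylModule

open TensorProduct

/-- The action of `D(u,r) ∈ 𝕊ₙ` on `ℱ(P,V) = P ⊗ V`:
`D(u,r)·(z ⊗ y) = (D(u,r)z) ⊗ y + (x^r z) ⊗ ((r uᵀ) y)`. -/
noncomputable def FAct {n : ℕ} {P V : Type*} [AddCommGroup P] [Module ℂ P]
    [AddCommGroup V] [Module ℂ V] (K : WeylModule n P)
    (ρ : Matrix (Fin n) (Fin n) ℂ →ₗ[ℂ] Module.End ℂ V)
    (u : Fin n → ℂ) (r : Fin n → ℤ) : Module.End ℂ (P ⊗[ℂ] V) :=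
  TensorProduct.map (K.D u r) LinearMap.id +
    TensorProduct.map (K.X r) (ρ (Matrix.vecMulVec (fun i => (r i : ℂ)) u))


namespace WeylModule
variable {n : ℕ} {P : Type*} [AddCommGroup P] [Module ℂ P]

/-- The Euler-type operator `E(u) = ∑ᵢ uᵢ ∂ᵢ` acting on `P`. -/
noncomputable def E (K : WeylModule n P) (u : Fin n → ℂ) : Module.End ℂ P :=
  ∑ i, u i • K.pd i

lemma D_eq (K : WeylModule n P) (u : Fin n → ℂ) (r : Fin n → ℤ) :
    K.D u r = K.X r * K.E u := rfl

lemma E_mul_X (K : WeylModule n P) (u : Fin n → ℂ) (s : Fin n → ℤ) :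
    K.E u * K.X s = K.X s * K.E u + pairing u s • K.X s := by
  unfold E pairing
  rw [Finset.sum_mul, Finset.mul_sum, Finset.sum_smul, ← Finset.sum_add_distrib]
  refine Finset.sum_congr rfl fun i _ => ?_
  rw [smul_mul_assoc, K.pd_X, mul_add, mul_smul_comm, mul_one, smul_add, mul_smul_comm,
    smul_smul]

lemma E_comm (K : WeylModule n P) (u v : Fin n → ℂ) : K.E u * K.E v = K.E v * K.E u := by
  unfold E
  rw [Finset.sum_mul_sum, Finset.sum_mul_sum, Finset.sum_comm]
  refine Finset.sum_congr rfl fun i _ => Finset.sum_congr rfl fun j _ => ?_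
  simp only [smul_mul_assoc, mul_smul_comm, smul_smul]
  rw [K.pd_comm i j, mul_comm (v i)]

lemma E_lin (K : WeylModule n P) (a b : ℂ) (u v : Fin n → ℂ) :
    K.E (a • v - b • u) = a • K.E v - b • K.E u := by
  unfold E
  rw [Finset.smul_sum, Finset.smul_sum, ← Finset.sum_sub_distrib]
  refine Finset.sum_congr rfl fun i _ => ?_
  simp [sub_smul, smul_smul]

lemma X_mul_D (K : WeylModule n P) (v : Fin n → ℂ) (r s : Fin n → ℤ) :
    K.X r * K.D v s = K.X (r + s) * K.E v := by
  rw [D_eq, ← mul_assoc, ← K.X_add]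

lemma D_mul_X (K : WeylModule n P) (u : Fin n → ℂ) (r s : Fin n → ℤ) :
    K.D u r * K.X s = K.X (r + s) * K.E u + pairing u s • K.X (r + s) := by
  rw [D_eq, mul_assoc, E_mul_X, mul_add, ← mul_assoc, ← K.X_add, mul_smul_comm, ← K.X_add]

lemma D_mul_D (K : WeylModule n P) (u v : Fin n → ℂ) (r s : Fin n → ℤ) :
    K.D u r * K.D v s
      = K.X (r + s) * (K.E u * K.E v) + pairing u s • (K.X (r + s) * K.E v) := by
  rw [K.D_eq v s, ← mul_assoc, D_mul_X, add_mul, smul_mul_assoc, mul_assoc]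

end WeylModule

lemma vecMulVec_mul_vecMulVec {n : ℕ} (a b c d : Fin n → ℂ) :
    Matrix.vecMulVec a b * Matrix.vecMulVec c d = (∑ i, b i * c i) • Matrix.vecMulVec a d := by
  ext i j
  simp only [Matrix.mul_apply, Matrix.vecMulVec_apply, Matrix.smul_apply, smul_eq_mul,
    Finset.sum_mul]
  refine Finset.sum_congr rfl fun k _ => ?_
  ring

lemma trace_vecMulVec' {n : ℕ} (u : Fin n → ℂ) (r : Fin n → ℤ) :
    (Matrix.vecMulVec (fun i => (r i : ℂ)) u).trace = pairing u r := by
  simp [Matrix.trace, Matrix.diag, Matrix.vecMulVec_apply, pairing, mul_comm]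

lemma Mkey {n : ℕ} (u v : Fin n → ℂ) (r s : Fin n → ℤ) :
    Matrix.vecMulVec (fun i => ((r + s) i : ℂ)) (pairing u s • v - pairing v r • u)
      = pairing u s • Matrix.vecMulVec (fun i => (s i : ℂ)) v
        - pairing v r • Matrix.vecMulVec (fun i => (r i : ℂ)) u
        + ⁅Matrix.vecMulVec (fun i => (r i : ℂ)) u,
           Matrix.vecMulVec (fun i => (s i : ℂ)) v⁆ := by
  rw [Ring.lie_def, vecMulVec_mul_vecMulVec, vecMulVec_mul_vecMulVec]
  have h1 : (∑ i, u i * (s i : ℂ)) = pairing u s := rfl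
  have h2 : (∑ i, v i * (r i : ℂ)) = pairing v r := rfl
  rw [h1, h2]
  ext i j
  simp only [Matrix.vecMulVec_apply, Matrix.smul_apply, Matrix.sub_apply, Matrix.add_apply,
    Pi.add_apply, Pi.sub_apply, Pi.smul_apply, smul_eq_mul, Int.cast_add]
  ring

section helper
variable {R M N : Type*} [CommRing R] [AddCommGroup M] [Module R M]
  [AddCommGroup N] [Module R N]

lemma map_sub_left' (f g : M →ₗ[R] M) (h : N →ₗ[R] N) :
    TensorProduct.map (f - g) h = TensorProduct.map f h - TensorProduct.map g h := by
  rw [sub_eq_add_neg, sub_eq_add_neg, TensorProduct.map_add_left, ← neg_one_smul R g,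
    TensorProduct.map_smul_left]
  module

lemma map_sub_right' (f : M →ₗ[R] M) (g h : N →ₗ[R] N) :
    TensorProduct.map f (g - h) = TensorProduct.map f g - TensorProduct.map f h := by
  rw [sub_eq_add_neg, sub_eq_add_neg, TensorProduct.map_add_right, ← neg_one_smul R h,
    TensorProduct.map_smul_right]
  module

end helper

/-- Formula (2.1) defines a Lie algebra action of `𝕊ₙ` on `P ⊗ V`:
`[D(u,r), D(v,s)]·w = D(u,r)·(D(v,s)·w) − D(v,s)·(D(u,r)·w)`, where
`[D(u,r), D(v,s)] = D(⟨u,s⟩v − ⟨v,r⟩u, r+s)`, for any `𝒦ₙ`-module `P` and any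
`𝔰𝔩ₙ`-module `V` (given by a linear map `ρ` preserving brackets of traceless matrices). -/
theorem Sn_action_on_tensor (n : ℕ) (P V : Type*) [AddCommGroup P] [Module ℂ P]
    [AddCommGroup V] [Module ℂ V] (K : WeylModule n P)
    (ρ : Matrix (Fin n) (Fin n) ℂ →ₗ[ℂ] Module.End ℂ V)
    (hρ : ∀ A B : Matrix (Fin n) (Fin n) ℂ, A.trace = 0 → B.trace = 0 →
      ρ ⁅A, B⁆ = ⁅ρ A, ρ B⁆)
    (u v : Fin n → ℂ) (r s : Fin n → ℤ)
    (hur : pairing u r = 0) (hvs : pairing v s = 0) :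
    FAct K ρ (pairing u s • v - pairing v r • u) (r + s) = ⁅FAct K ρ u r, FAct K ρ v s⁆ := by
  have hsr : s + r = r + s := add_comm s r
  have hbr : ρ ⁅Matrix.vecMulVec (fun i => (r i : ℂ)) u,
      Matrix.vecMulVec (fun i => (s i : ℂ)) v⁆
      = ρ (Matrix.vecMulVec (fun i => (r i : ℂ)) u) * ρ (Matrix.vecMulVec (fun i => (s i : ℂ)) v)
        - ρ (Matrix.vecMulVec (fun i => (s i : ℂ)) v) * ρ (Matrix.vecMulVec (fun i => (r i : ℂ)) u) := by
    rw [hρ _ _ (by rw [trace_vecMulVec', hur]) (by rw [trace_vecMulVec', hvs]), Ring.lie_def]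
  have key1 : K.D (pairing u s • v - pairing v r • u) (r + s)
      = pairing u s • (K.X (r + s) * K.E v) - pairing v r • (K.X (r + s) * K.E u) := by
    rw [K.D_eq, K.E_lin, mul_sub, mul_smul_comm, mul_smul_comm]
  have key2 : ρ (Matrix.vecMulVec (fun i => ((r + s) i : ℂ)) (pairing u s • v - pairing v r • u))
      = pairing u s • ρ (Matrix.vecMulVec (fun i => (s i : ℂ)) v)
        - pairing v r • ρ (Matrix.vecMulVec (fun i => (r i : ℂ)) u)
        + (ρ (Matrix.vecMulVec (fun i => (r i : ℂ)) u) * ρ (Matrix.vecMulVec (fun i => (s i : ℂ)) v)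
           - ρ (Matrix.vecMulVec (fun i => (s i : ℂ)) v) * ρ (Matrix.vecMulVec (fun i => (r i : ℂ)) u)) := by
    rw [Mkey, map_add, map_sub, map_smul, map_smul, hbr]
  rw [Ring.lie_def]
  unfold FAct
  simp only [mul_add, add_mul, ← Module.End.one_eq_id, ← TensorProduct.map_mul, one_mul,
    mul_one]
  rw [key1, key2, K.D_mul_D u v r s, K.D_mul_D v u s r, K.D_mul_X u r s, K.D_mul_X v s r,
    K.X_mul_D v r s, K.X_mul_D u s r, ← K.X_add r s, ← K.X_add s r, hsr, K.E_comm v u]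
  simp only [map_sub_left', map_sub_right', TensorProduct.map_add_left,
    TensorProduct.map_add_right, TensorProduct.map_smul_left, TensorProduct.map_smul_right]
  abel
end

section
/- Let L be an irreducible module over 𝔰𝔩_n(ℂ) (not necessarily a weight module). Then for any i ≠ j with 1 ≤ i, j ≤ n, the action of the matrix unit E_{ij} on L is either injective or locally nilpotent (every vector is annihilated by some power of E_{ij}). -/
/-! Since `E_{ij}² = 0`, `ad E_{ij}` is nilpotent, so by the binomial expansion of
`E_{ij}ᵏ ⁅y, v⁆` the vectors killed by some power of `E_{ij}` form a submodule. By irreducibility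
it is `0`, whence `E_{ij}` has zero kernel, or all of `L`. -/

open LieAlgebra.SpecialLinear

namespace LieModule

variable {R L : Type*} (M : Type*) [CommRing R] [LieRing L] [LieAlgebra R L]
  [AddCommGroup M] [Module R M] [LieRingModule L M] [LieModule R L M]

def maxGenEigenspaceZeroOfIsNilpotentAd {x : L} (hx : _root_.IsNilpotent (LieAlgebra.ad R L x)) :
    LieSubmodule R L M :=
  { (toEnd R L M x).maxGenEigenspace 0 with
    lie_mem := fun {y m} hm => by
      have hy : y ∈ (LieAlgebra.ad R L x).maxGenEigenspace 0 := by
        obtain ⟨k, hk⟩ := hx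
        exact (Module.End.mem_maxGenEigenspace _ _ _).mpr ⟨k, by simp [hk]⟩
      simpa using lie_mem_maxGenEigenspace_toEnd hy hm }

lemma mem_maxGenEigenspaceZeroOfIsNilpotentAd {x : L}
    (hx : _root_.IsNilpotent (LieAlgebra.ad R L x)) (m : M) :
    m ∈ maxGenEigenspaceZeroOfIsNilpotentAd M hx ↔ ∃ k : ℕ, (toEnd R L M x ^ k) m = 0 :=
  (Module.End.mem_maxGenEigenspace _ _ _).trans <| by simp only [zero_smul, sub_zero]

lemma injective_toEnd_or_forall_exists_pow_toEnd_apply_eq_zero [IsIrreducible R L M] {x : L}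
    (hx : _root_.IsNilpotent (LieAlgebra.ad R L x)) :
    Function.Injective (toEnd R L M x) ∨ ∀ m : M, ∃ k : ℕ, (toEnd R L M x ^ k) m = 0 := by
  rcases eq_bot_or_eq_top (maxGenEigenspaceZeroOfIsNilpotentAd M hx) with hbot | htop
  · refine Or.inl <| (injective_iff_map_eq_zero _).mpr fun m hm => ?_
    have hmem : m ∈ maxGenEigenspaceZeroOfIsNilpotentAd M hx :=
      (mem_maxGenEigenspaceZeroOfIsNilpotentAd M hx m).mpr ⟨1, by rwa [pow_one]⟩
    rwa [hbot, LieSubmodule.mem_bot] at hmem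
  · exact Or.inr fun m => (mem_maxGenEigenspaceZeroOfIsNilpotentAd M hx m).mp (htop ▸ trivial)

end LieModule

lemma LieAlgebra.SpecialLinear.isNilpotent_ad_single {n R : Type*} [DecidableEq n] [Fintype n]
    [CommRing R] {i j : n} (hij : i ≠ j) (r : R) :
    IsNilpotent (LieAlgebra.ad R (sl n R) (single i j hij r)) :=
  LieAlgebra.isNilpotent_ad_of_isNilpotent
    ⟨2, by simp [val_single, sq, Matrix.single_mul_single_of_ne, hij.symm]⟩

/-- Let `L` be an irreducible module over `𝔰𝔩ₙ(ℂ)` (not necessarily a weight module).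
For any `i ≠ j`, the matrix unit `E_{ij}` acts on `L` either injectively or locally
nilpotently. -/
theorem sl_matrix_unit_injective_or_locallyNilpotent (n : ℕ)
    (L : Type*) [AddCommGroup L] [Module ℂ L]
    [LieRingModule (sl (Fin n) ℂ) L] [LieModule ℂ (sl (Fin n) ℂ) L]
    [LieModule.IsIrreducible ℂ (sl (Fin n) ℂ) L]
    (i j : Fin n) (hij : j ≠ i) :
    Function.Injective (fun v : L => ⁅single i j hij.symm (1 : ℂ), v⁆) ∨
      ∀ v : L, ∃ k : ℕ,
        ((LieModule.toEnd ℂ (sl (Fin n) ℂ) L (single i j hij.symm (1 : ℂ))) ^ k) v = 0 :=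
  LieModule.injective_toEnd_or_forall_exists_pow_toEnd_apply_eq_zero L
    (isNilpotent_ad_single hij.symm 1)
end

section
/- The map d_k : P ⊗ Λ^k ℂ^n → P ⊗ Λ^{k+1} ℂ^n, p ⊗ w ↦ Σ_i (∂_i p) ⊗ (e_i ∧ w), is a homomorphism of 𝕊_n-modules, where 𝕊_n acts by D(u,r)(z ⊗ y) = (D(u,r)z) ⊗ y + (x^r z) ⊗ ((r uᵀ)y), with the identity matrix component of the 𝔤𝔩_n-action on Λ^k ℂ^n acting by the scalar k. -/
open TensorProduct

/-- Left wedge multiplication `w ↦ v ∧ w`, as a map `⋀ᵏℂⁿ → ⋀ᵏ⁺¹ℂⁿ`. -/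
noncomputable def wedgeMap (n k : ℕ) (v : Fin n → ℂ) :
    ⋀[ℂ]^k (Fin n → ℂ) →ₗ[ℂ] ⋀[ℂ]^(k+1) (Fin n → ℂ) :=
  LinearMap.codRestrict _
    ((LinearMap.mulLeft ℂ (ExteriorAlgebra.ι ℂ v)).comp (Submodule.subtype _))
    (fun x => by
      show ExteriorAlgebra.ι ℂ v * (x : ExteriorAlgebra ℂ (Fin n → ℂ)) ∈
        LinearMap.range (ExteriorAlgebra.ι ℂ (M := Fin n → ℂ)) ^ (k + 1)
      rw [pow_succ']
      exact Submodule.mul_mem_mul (LinearMap.mem_range_self _ v) x.2)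

/-- The de Rham differential `d_k : P ⊗ ⋀ᵏℂⁿ → P ⊗ ⋀ᵏ⁺¹ℂⁿ`,
`p ⊗ w ↦ ∑ᵢ (∂ᵢ p) ⊗ (eᵢ ∧ w)`. -/
noncomputable def deRham {n : ℕ} {P : Type*} [AddCommGroup P] [Module ℂ P]
    (K : WeylModule n P) (k : ℕ) :
    P ⊗[ℂ] ⋀[ℂ]^k (Fin n → ℂ) →ₗ[ℂ] P ⊗[ℂ] ⋀[ℂ]^(k+1) (Fin n → ℂ) :=
  ∑ i, TensorProduct.map (K.pd i) (wedgeMap n k (Pi.single i 1))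

/-- The decomposable wedge `v₁ ∧ ⋯ ∧ v_k` as an element of `⋀ᵏℂⁿ`. -/
noncomputable def wedgeVec {n k : ℕ} (v : Fin k → (Fin n → ℂ)) : ⋀[ℂ]^k (Fin n → ℂ) :=
  ⟨ExteriorAlgebra.ιMulti ℂ k v, ExteriorAlgebra.ιMulti_range ℂ k (Set.mem_range_self v)⟩

section helpers

variable {n k : ℕ}

lemma wedgeMap_coe (v : Fin n → ℂ) (x : ⋀[ℂ]^k (Fin n → ℂ)) :
    (wedgeMap n k v x : ExteriorAlgebra ℂ (Fin n → ℂ)) = ExteriorAlgebra.ι ℂ v * (x : ExteriorAlgebra ℂ (Fin n → ℂ)) := rfl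

lemma wedgeVec_coe (w : Fin k → (Fin n → ℂ)) :
    (wedgeVec w : ExteriorAlgebra ℂ (Fin n → ℂ)) = ExteriorAlgebra.ιMulti ℂ k w := rfl

lemma wedgeMap_wedgeVec (v : Fin n → ℂ) (w : Fin k → (Fin n → ℂ)) :
    wedgeMap n k v (wedgeVec w) = wedgeVec (Fin.cons v w) := by
  apply Subtype.ext
  rw [wedgeMap_coe, wedgeVec_coe, wedgeVec_coe, ExteriorAlgebra.ιMulti_succ_apply]
  congr 1

lemma wedgeMap_smul (c : ℂ) (v : Fin n → ℂ) (x : ⋀[ℂ]^k (Fin n → ℂ)) :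
    wedgeMap n k (c • v) x = c • wedgeMap n k v x := by
  apply Subtype.ext
  rw [wedgeMap_coe, Submodule.coe_smul, wedgeMap_coe, map_smul, smul_mul_assoc]

lemma wedgeMap_sum (c : Fin n → ℂ) (x : ⋀[ℂ]^k (Fin n → ℂ)) :
    ∑ i, c i • wedgeMap n k (Pi.single i 1) x = wedgeMap n k c x := by
  apply Subtype.ext
  rw [Submodule.coe_sum]
  simp only [Submodule.coe_smul, wedgeMap_coe]
  have hc : (ExteriorAlgebra.ι ℂ (M := Fin n → ℂ)) c = ∑ i, c i • ExteriorAlgebra.ι ℂ (Pi.single i (1:ℂ)) := by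
    simp_rw [← map_smul, ← map_sum]
    congr 1
    simp_rw [← Pi.single_smul, smul_eq_mul, mul_one]
    exact (Finset.univ_sum_single c).symm
  rw [hc, Finset.sum_mul]
  simp [smul_mul_assoc]


lemma wedgeVec_update_smul (w : Fin k → (Fin n → ℂ)) (l : Fin k) (c : ℂ) (x : Fin n → ℂ) :
    wedgeVec (Function.update w l (c • x)) = c • wedgeVec (Function.update w l x) := by
  apply Subtype.ext
  rw [wedgeVec_coe, Submodule.coe_smul, wedgeVec_coe]
  exact (ExteriorAlgebra.ιMulti ℂ k).map_update_smul w l c x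

lemma wedgeVec_cons_update_eq_zero (x : Fin n → ℂ) (w : Fin k → (Fin n → ℂ)) (l : Fin k) :
    wedgeVec (Fin.cons x (Function.update w l x)) = 0 := by
  apply Subtype.ext
  rw [wedgeVec_coe]
  refine AlternatingMap.map_eq_zero_of_eq _ _ (i := 0) (j := l.succ) ?_ (Fin.succ_ne_zero l).symm
  rw [Fin.cons_zero, Fin.cons_succ, Function.update_self]

lemma vecMulVec_mulVec (a b v : Fin n → ℂ) :
    (Matrix.vecMulVec a b).mulVec v = (dotProduct b v) • a := by
  funext i
  simp [Matrix.vecMulVec, Matrix.mulVec, dotProduct, Finset.mul_sum, mul_assoc, mul_comm,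
    mul_left_comm]

lemma wedgeVec_span :
    Submodule.span ℂ (Set.range (wedgeVec (n := n) (k := k))) = ⊤ := by
  apply Submodule.map_injective_of_injective (⋀[ℂ]^k (Fin n → ℂ)).injective_subtype
  rw [Submodule.map_span, Submodule.map_subtype_top, ← Set.range_comp]
  exact ExteriorAlgebra.ιMulti_span_fixedDegree ℂ k

end helpers

lemma deRham_tmul {n : ℕ} {P : Type*} [AddCommGroup P] [Module ℂ P]
    (K : WeylModule n P) (k : ℕ) (q : P) (y : ⋀[ℂ]^k (Fin n → ℂ)) :
    deRham K k (q ⊗ₜ[ℂ] y) = ∑ i, (K.pd i q) ⊗ₜ[ℂ] (wedgeMap n k (Pi.single i 1) y) := by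
  simp [deRham]

lemma FAct_tmul {n : ℕ} {P V : Type*} [AddCommGroup P] [Module ℂ P]
    [AddCommGroup V] [Module ℂ V] (K : WeylModule n P)
    (ρ : Matrix (Fin n) (Fin n) ℂ →ₗ[ℂ] Module.End ℂ V)
    (u : Fin n → ℂ) (r : Fin n → ℤ) (q : P) (y : V) :
    FAct K ρ u r (q ⊗ₜ[ℂ] y) = (K.D u r q) ⊗ₜ[ℂ] y +
      (K.X r q) ⊗ₜ[ℂ] (ρ (Matrix.vecMulVec (fun i => (r i : ℂ)) u) y) := by
  simp [FAct]

set_option maxHeartbeats 2000000 in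
/-- The de Rham map `d_k : ℱ(P, ⋀ᵏℂⁿ) → ℱ(P, ⋀ᵏ⁺¹ℂⁿ)` is a homomorphism of
`𝕊ₙ`-modules, where `𝔤𝔩ₙ` acts on the exterior powers by the standard action
`X(v₁∧⋯∧v_k) = ∑ᵢ v₁∧⋯∧Xvᵢ∧⋯∧v_k` (so the identity matrix acts by the scalar `k`). -/
theorem deRham_Sn_equivariant (n : ℕ) (P : Type*) [AddCommGroup P] [Module ℂ P]
    (K : WeylModule n P) (k : ℕ)
    (ρk : Matrix (Fin n) (Fin n) ℂ →ₗ[ℂ] Module.End ℂ (⋀[ℂ]^k (Fin n → ℂ)))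
    (ρk1 : Matrix (Fin n) (Fin n) ℂ →ₗ[ℂ] Module.End ℂ (⋀[ℂ]^(k+1) (Fin n → ℂ)))
    (hρk : ∀ (A : Matrix (Fin n) (Fin n) ℂ) (v : Fin k → (Fin n → ℂ)),
      ρk A (wedgeVec v) = ∑ i, wedgeVec (Function.update v i (A.mulVec (v i))))
    (hρk1 : ∀ (A : Matrix (Fin n) (Fin n) ℂ) (v : Fin (k+1) → (Fin n → ℂ)),
      ρk1 A (wedgeVec v) = ∑ i, wedgeVec (Function.update v i (A.mulVec (v i))))
    (u : Fin n → ℂ) (r : Fin n → ℤ) (hur : pairing u r = 0) :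
    (deRham K k) ∘ₗ (FAct K ρk u r) = (FAct K ρk1 u r) ∘ₗ (deRham K k) := by

  set rc : Fin n → ℂ := fun i => (r i : ℂ) with hrc
  set A : Matrix (Fin n) (Fin n) ℂ := Matrix.vecMulVec rc u with hA
  -- operator identities
  have hXpd : ∀ i, K.pd i * K.X r = K.X r * K.pd i + rc i • K.X r := by
    intro i
    rw [K.pd_X, mul_add]
    congr 1
    rw [mul_smul_comm, mul_one]
  have hpdS : ∀ i, K.pd i * (∑ j, u j • K.pd j) = (∑ j, u j • K.pd j) * K.pd i := by
    intro i
    rw [Finset.mul_sum, Finset.sum_mul]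
    refine Finset.sum_congr rfl fun j _ => ?_
    rw [mul_smul_comm, smul_mul_assoc, K.pd_comm]
  have hpdD : ∀ i, K.pd i * K.D u r = K.D u r * K.pd i + rc i • K.D u r := by
    intro i
    show K.pd i * (K.X r * _) = _
    rw [← mul_assoc, hXpd i, add_mul, mul_assoc, hpdS i, ← mul_assoc, smul_mul_assoc]
    rfl
  have hpdD' : ∀ i (p : P), K.pd i (K.D u r p) =
      K.D u r (K.pd i p) + rc i • K.D u r p := by
    intro i p
    have h := LinearMap.congr_fun (hpdD i) p
    simpa [Module.End.mul_apply] using h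
  have hpdX' : ∀ i (p : P), K.pd i (K.X r p) = K.X r (K.pd i p) + rc i • K.X r p := by
    intro i p
    have h := LinearMap.congr_fun (hXpd i) p
    simpa [Module.End.mul_apply] using h
  have hD_apply : ∀ p : P, K.D u r p = ∑ j, u j • K.X r (K.pd j p) := by
    intro p
    show (K.X r * _) p = _
    rw [Module.End.mul_apply]
    simp [map_sum]
  -- derivation property of ρk1 on wedges
  have hderiv : ∀ (v : Fin n → ℂ) (w : Fin k → (Fin n → ℂ)),
      ρk1 A (wedgeMap n k v (wedgeVec w)) =
        wedgeMap n k (A.mulVec v) (wedgeVec w) + wedgeMap n k v (ρk A (wedgeVec w)) := by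
    intro v w
    rw [wedgeMap_wedgeVec, hρk1, Fin.sum_univ_succ]
    congr 1
    · rw [Fin.cons_zero, Fin.update_cons_zero, wedgeMap_wedgeVec]
    · rw [hρk, map_sum]
      refine Finset.sum_congr rfl fun i _ => ?_
      rw [Fin.cons_succ, ← Fin.cons_update, wedgeMap_wedgeVec]
  -- the key vanishing
  have hWrρ : ∀ w : Fin k → (Fin n → ℂ), wedgeMap n k rc (ρk A (wedgeVec w)) = 0 := by
    intro w
    rw [hρk, map_sum]
    refine Finset.sum_eq_zero fun l _ => ?_
    rw [hA, vecMulVec_mulVec, wedgeVec_update_smul, map_smul, wedgeMap_wedgeVec,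
      wedgeVec_cons_update_eq_zero, smul_zero]
  apply TensorProduct.ext'
  intro p y
  have hy : y ∈ Submodule.span ℂ (Set.range (wedgeVec (n := n) (k := k))) := by
    rw [wedgeVec_span]; trivial
  induction hy using Submodule.span_induction with
  | mem y hy =>
    obtain ⟨w, rfl⟩ := hy
    simp only [LinearMap.comp_apply]
    rw [FAct_tmul, ← hrc, ← hA, map_add, deRham_tmul, deRham_tmul, deRham_tmul, map_sum]
    have e1 : ∀ i : Fin n, (K.pd i (K.D u r p)) ⊗ₜ[ℂ] (wedgeMap n k (Pi.single i 1) (wedgeVec w)) =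
        (K.D u r (K.pd i p)) ⊗ₜ[ℂ] (wedgeMap n k (Pi.single i 1) (wedgeVec w)) +
          (K.D u r p) ⊗ₜ[ℂ] (rc i • wedgeMap n k (Pi.single i 1) (wedgeVec w)) := by
      intro i
      rw [hpdD' i p, TensorProduct.add_tmul, TensorProduct.tmul_smul, TensorProduct.smul_tmul']
    have e2 : ∀ i : Fin n, (K.pd i (K.X r p)) ⊗ₜ[ℂ] (wedgeMap n k (Pi.single i 1) (ρk A (wedgeVec w))) =
        (K.X r (K.pd i p)) ⊗ₜ[ℂ] (wedgeMap n k (Pi.single i 1) (ρk A (wedgeVec w))) +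
          (K.X r p) ⊗ₜ[ℂ] (rc i • wedgeMap n k (Pi.single i 1) (ρk A (wedgeVec w))) := by
      intro i
      rw [hpdX' i p, TensorProduct.add_tmul, TensorProduct.tmul_smul, TensorProduct.smul_tmul']
    rw [Finset.sum_congr rfl (fun i _ => e1 i), Finset.sum_congr rfl (fun i _ => e2 i),
      Finset.sum_add_distrib, Finset.sum_add_distrib, ← TensorProduct.tmul_sum,
      ← TensorProduct.tmul_sum, wedgeMap_sum, wedgeMap_sum, hWrρ, TensorProduct.tmul_zero,
      add_zero]
    -- now the RHS
    have e3 : ∀ i : Fin n, FAct K ρk1 u r ((K.pd i p) ⊗ₜ[ℂ] (wedgeMap n k (Pi.single i 1) (wedgeVec w))) =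
        (K.D u r (K.pd i p)) ⊗ₜ[ℂ] (wedgeMap n k (Pi.single i 1) (wedgeVec w)) +
          (u i • (K.X r (K.pd i p)) ⊗ₜ[ℂ] (wedgeMap n k rc (wedgeVec w)) +
            (K.X r (K.pd i p)) ⊗ₜ[ℂ] (wedgeMap n k (Pi.single i 1) (ρk A (wedgeVec w)))) := by
      intro i
      rw [FAct_tmul, ← hrc, ← hA, hderiv, TensorProduct.tmul_add]
      congr 2
      have : A.mulVec (Pi.single i 1) = u i • rc := by
        rw [hA, vecMulVec_mulVec]
        congr 1
        simp [dotProduct, Pi.single_apply]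
      rw [this, wedgeMap_smul, TensorProduct.tmul_smul, TensorProduct.smul_tmul']
    rw [Finset.sum_congr rfl (fun i _ => e3 i), Finset.sum_add_distrib, Finset.sum_add_distrib]
    have e4 : ∑ i, u i • (K.X r (K.pd i p)) ⊗ₜ[ℂ] (wedgeMap n k rc (wedgeVec w)) =
        (K.D u r p) ⊗ₜ[ℂ] (wedgeMap n k rc (wedgeVec w)) := by
      rw [hD_apply p, TensorProduct.sum_tmul]
      refine Finset.sum_congr rfl fun i _ => ?_
      rw [TensorProduct.smul_tmul']
    rw [e4]
    abel
  | zero =>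
    simp only [LinearMap.comp_apply, TensorProduct.tmul_zero, map_zero]
  | add a b _ _ ha hb =>
    simp only [LinearMap.comp_apply] at ha hb ⊢
    rw [TensorProduct.tmul_add, map_add, map_add, ha, hb, map_add, map_add]
  | smul c a _ ha =>
    simp only [LinearMap.comp_apply] at ha ⊢
    rw [TensorProduct.tmul_smul, map_smul, map_smul, ha, map_smul, map_smul]
end

section
/- Let A_n' = span{ x^r : r ∈ ℤ^n, r ≠ 0 } ⊆ A_n. Then A_n' is a simple 𝕊_n-module, and A_n = A_n' ⊕ ℂ·1 as 𝕊_n-modules, where ℂ·1 is a trivial submodule. -/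
/-- The Laurent polynomial algebra `Aₙ`, as `ℤⁿ →₀ ℂ` (monomial `x^r` ↦ `single r 1`). -/
abbrev LaurentAlg (n : ℕ) := (Fin n → ℤ) →₀ ℂ

/-- The divergence-zero vector field `D(u,r)` (with `⟨u,r⟩ = 0` imposed in statements),
acting on monomials by `D(u,r) x^s = ⟨u,s⟩ x^{r+s}`. -/
noncomputable def Dop {n : ℕ} (u : Fin n → ℂ) (r : Fin n → ℤ) :
    Module.End ℂ (LaurentAlg n) :=
  Finsupp.lsum ℂ fun s => pairing u s • Finsupp.lsingle (r + s)

/-- `Aₙ' = span{x^r : r ≠ 0}`. -/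
noncomputable def LaurentAlg' (n : ℕ) : Submodule ℂ (LaurentAlg n) :=
  Submodule.span ℂ {f | ∃ r : Fin n → ℤ, r ≠ 0 ∧ f = Finsupp.single r 1}

section Aux

variable {n : ℕ}

lemma pairing_zero (u : Fin n → ℂ) : pairing u 0 = 0 := by simp [pairing]

lemma pairing_neg (u : Fin n → ℂ) (r : Fin n → ℤ) : pairing u (-r) = -pairing u r := by
  simp [pairing, mul_neg, Finset.sum_neg_distrib]

lemma Dop_single (u : Fin n → ℂ) (r s : Fin n → ℤ) (c : ℂ) :
    Dop u r (Finsupp.single s c) = pairing u s • Finsupp.single (r + s) c := by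
  simp [Dop]

lemma Dop_zero_apply (u : Fin n → ℂ) (f : LaurentAlg n) (t : Fin n → ℤ) :
    (Dop u 0 f) t = pairing u t * f t := by
  classical
  simp only [Dop, Finsupp.lsum_apply, Finsupp.sum, LinearMap.smul_apply, Finsupp.lsingle_apply,
    Finset.sum_apply', Finsupp.smul_apply, Finsupp.single_apply, zero_add, smul_eq_mul, mul_ite,
    mul_zero]
  rw [Finset.sum_ite_eq' f.support t (fun s => pairing u s * f s)]
  by_cases h : t ∈ f.support
  · simp [h]
  · simp [h, Finsupp.notMem_support_iff.mp h]

lemma mem_A' (f : LaurentAlg n) : f ∈ LaurentAlg' n ↔ f 0 = 0 := by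
  constructor
  · intro hf
    induction hf using Submodule.span_induction with
    | mem g hg => obtain ⟨r, hr, rfl⟩ := hg; simp [Finsupp.single_apply, hr]
    | zero => simp
    | add g h _ _ hg hh => simp [hg, hh]
    | smul c g _ hg => simp [hg]
  · intro hf
    rw [← Finsupp.sum_single f, Finsupp.sum]
    apply Submodule.sum_mem
    intro a ha
    have ha0 : a ≠ 0 := fun h => (Finsupp.mem_support_iff.mp ha) (h ▸ hf)
    have : Finsupp.single a (f a) = (f a) • Finsupp.single a (1 : ℂ) := by
      rw [Finsupp.smul_single, smul_eq_mul, mul_one]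
    rw [this]
    exact Submodule.smul_mem _ _ (Submodule.subset_span ⟨a, ha0, rfl⟩)

/-- Linear independence witness for integer vectors: a nonzero 2×2 minor. -/
def LIndep {n : ℕ} (s t : Fin n → ℤ) : Prop := ∃ j k, s j * t k - s k * t j ≠ 0

lemma lindep_symm {s t : Fin n → ℤ} (h : LIndep s t) : LIndep t s := by
  obtain ⟨j, k, h⟩ := h
  exact ⟨k, j, fun h' => h (by linarith)⟩

lemma pairing_pair (j k : Fin n) (a b : ℂ) (v : Fin n → ℤ) :
    pairing (fun i => (if i = j then a else 0) + (if i = k then b else 0)) v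
      = a * v j + b * v k := by
  simp [pairing, add_mul, ite_mul, zero_mul, Finset.sum_add_distrib]

lemma step_lemma (N : Submodule ℂ (LaurentAlg n))
    (hN : ∀ (u : Fin n → ℂ) (r : Fin n → ℤ), pairing u r = 0 → N.map (Dop u r) ≤ N)
    {s t : Fin n → ℤ} (hst : LIndep s t) (hs : Finsupp.single s (1 : ℂ) ∈ N) :
    Finsupp.single t (1 : ℂ) ∈ N := by
  obtain ⟨j, k, h⟩ := hst
  set r : Fin n → ℤ := t - s with hr
  set u : Fin n → ℂ := fun i =>
    (if i = j then ((r k : ℤ) : ℂ) else 0) + (if i = k then (-(r j : ℤ) : ℂ) else 0) with hu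
  have hur : pairing u r = 0 := by rw [hu, pairing_pair]; ring
  have hus : pairing u s = ((t k * s j - t j * s k : ℤ) : ℂ) := by
    rw [hu, pairing_pair, hr]
    push_cast [Pi.sub_apply]
    ring
  have hus0 : pairing u s ≠ 0 := by
    rw [hus, Ne, Int.cast_eq_zero]
    intro h'; exact h (by linarith)
  have hmem : Dop u r (Finsupp.single s (1 : ℂ)) ∈ N := hN u r hur ⟨_, hs, rfl⟩
  rw [Dop_single] at hmem
  have hrs : r + s = t := by rw [hr]; abel
  rw [hrs] at hmem
  have := N.smul_mem (pairing u s)⁻¹ hmem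
  rwa [smul_smul, inv_mul_cancel₀ hus0, one_smul] at this

lemma not_lindep_single {s : Fin n → ℤ} {a : Fin n}
    (h : ¬ LIndep s (fun i => if i = a then (1:ℤ) else 0)) : ∀ j, j ≠ a → s j = 0 := by
  intro j hj
  rw [LIndep] at h
  push_neg at h
  have := h j a
  simpa [hj] using this

lemma supported_ne_zero {t : Fin n → ℤ} {a : Fin n} (hz : ∀ j, j ≠ a → t j = 0)
    (ht : t ≠ 0) : t a ≠ 0 := by
  intro h
  apply ht
  funext j
  by_cases hj : j = a
  · rw [hj]; exact h
  · exact hz j hj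

lemma lindep_of_supported {s t : Fin n → ℤ} {a : Fin n} (hz : ∀ j, j ≠ a → t j = 0)
    (hta : t a ≠ 0) (h : LIndep s (fun i => if i = a then (1:ℤ) else 0)) : LIndep s t := by
  obtain ⟨j, k, h⟩ := h
  have ht : ∀ i, t i = t a * (if i = a then (1:ℤ) else 0) := by
    intro i
    by_cases hi : i = a
    · simp [hi]
    · simp [hi, hz i hi]
  refine ⟨j, k, ?_⟩
  rw [ht k, ht j]
  have : s j * (t a * (if k = a then (1:ℤ) else 0)) - s k * (t a * (if j = a then (1:ℤ) else 0))
      = t a * (s j * (if k = a then (1:ℤ) else 0) - s k * (if j = a then (1:ℤ) else 0)) := by ring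
  rw [this]
  exact mul_ne_zero hta h

lemma chain_lemma (hn : 2 ≤ n) (N : Submodule ℂ (LaurentAlg n))
    (hN : ∀ (u : Fin n → ℂ) (r : Fin n → ℤ), pairing u r = 0 → N.map (Dop u r) ≤ N)
    {s t : Fin n → ℤ} (hs0 : s ≠ 0) (ht0 : t ≠ 0)
    (hs : Finsupp.single s (1 : ℂ) ∈ N) : Finsupp.single t (1 : ℂ) ∈ N := by
  classical
  by_cases hst : LIndep s t
  · exact step_lemma N hN hst hs
  have h01 : (⟨0, by omega⟩ : Fin n) ≠ ⟨1, by omega⟩ := by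
    simp [Fin.ext_iff]
  set i0 : Fin n := ⟨0, by omega⟩
  set i1 : Fin n := ⟨1, by omega⟩
  by_cases h0 : LIndep s (fun i => if i = i0 then (1:ℤ) else 0)
  · by_cases ht0' : LIndep t (fun i => if i = i0 then (1:ℤ) else 0)
    · exact step_lemma N hN (lindep_symm ht0') (step_lemma N hN h0 hs)
    · exact absurd (lindep_of_supported (not_lindep_single ht0')
        (supported_ne_zero (not_lindep_single ht0') ht0) h0) hst
  · have hz := not_lindep_single h0
    have hsa : s i0 ≠ 0 := supported_ne_zero hz hs0
    have h1 : LIndep s (fun i => if i = i1 then (1:ℤ) else 0) := by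
      refine ⟨i0, i1, ?_⟩
      simp [h01, Ne.symm h01, hsa]
    by_cases ht1 : LIndep t (fun i => if i = i1 then (1:ℤ) else 0)
    · exact step_lemma N hN (lindep_symm ht1) (step_lemma N hN h1 hs)
    · exact absurd (lindep_of_supported (not_lindep_single ht1)
        (supported_ne_zero (not_lindep_single ht1) ht0) h1) hst

lemma extract_lemma (N : Submodule ℂ (LaurentAlg n))
    (hN : ∀ (u : Fin n → ℂ) (r : Fin n → ℤ), pairing u r = 0 → N.map (Dop u r) ≤ N) :
    ∀ (m : ℕ) (f : LaurentAlg n), f.support.card ≤ m → f ∈ N →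
      ∀ s, Finsupp.single s (f s) ∈ N := by
  intro m
  induction m with
  | zero =>
    intro f hc hf s
    have : f = 0 := by rwa [Nat.le_zero, Finset.card_eq_zero, Finsupp.support_eq_empty] at hc
    simpa [this] using N.zero_mem
  | succ m ih =>
    intro f hc hf s
    by_cases hfs : f s = 0
    · simpa [hfs] using N.zero_mem
    by_cases hall : ∀ t ∈ f.support, t = s
    · have : f = Finsupp.single s (f s) :=
        Finsupp.support_subset_singleton.mp (fun t ht => Finset.mem_singleton.mpr (hall t ht))
      rwa [← this]
    push_neg at hall
    obtain ⟨t, htmem, hts⟩ := hall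
    obtain ⟨i, hi⟩ : ∃ i, t i ≠ s i := by
      by_contra h; push_neg at h; exact hts (funext h)
    set u : Fin n → ℂ := fun j => if j = i then 1 else 0 with hu
    have hDf : Dop u 0 f ∈ N := hN u 0 (pairing_zero u) ⟨f, hf, rfl⟩
    set g : LaurentAlg n := Dop u 0 f - ((t i : ℤ) : ℂ) • f with hg
    have hgN : g ∈ N := N.sub_mem hDf (N.smul_mem _ hf)
    have hp : ∀ v : Fin n → ℤ, pairing u v = ((v i : ℤ) : ℂ) := by
      intro v
      simp [pairing, hu, ite_mul, zero_mul, one_mul]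
    have hgval : ∀ v, g v = (((v i : ℤ) : ℂ) - ((t i : ℤ) : ℂ)) * f v := by
      intro v
      rw [hg, Finsupp.sub_apply, Finsupp.smul_apply, Dop_zero_apply, hp v, smul_eq_mul]
      ring
    have hsub : g.support ⊆ f.support.erase t := by
      intro v hv
      rw [Finsupp.mem_support_iff] at hv
      rw [Finset.mem_erase]
      constructor
      · intro hvt
        apply hv
        rw [hvt, hgval t, sub_self, zero_mul]
      · rw [Finsupp.mem_support_iff]
        intro hfv
        apply hv
        rw [hgval v, hfv, mul_zero]
    have hcard : g.support.card ≤ m := by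
      have h1 := Finset.card_le_card hsub
      rw [Finset.card_erase_of_mem htmem] at h1
      omega
    have hgs := ih g hcard hgN s
    have hc0 : (((s i : ℤ) : ℂ) - ((t i : ℤ) : ℂ)) ≠ 0 := by
      rw [sub_ne_zero]
      exact fun h => hi (by exact_mod_cast h.symm)
    have heq : Finsupp.single s (f s)
        = (((s i : ℤ) : ℂ) - ((t i : ℤ) : ℂ))⁻¹ • Finsupp.single s (g s) := by
      rw [hgval s, Finsupp.smul_single, smul_eq_mul, ← mul_assoc, inv_mul_cancel₀ hc0, one_mul]
    rw [heq]
    exact N.smul_mem _ hgs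

end Aux

/-- Let `n ≥ 2`. Then `Aₙ'` and `ℂ·1` are `𝕊ₙ`-submodules of `Aₙ`, with
`Aₙ = Aₙ' ⊕ ℂ·1`, the submodule `ℂ·1` is trivial, and `Aₙ'` is a *simple*
`𝕊ₙ`-module: every nonzero subspace of `Aₙ'` invariant under all `D(u,r)` with
`⟨u,r⟩ = 0` is all of `Aₙ'`. -/
theorem laurent_decomposition_and_simplicity (n : ℕ) (hn : 2 ≤ n) :
    (∀ (u : Fin n → ℂ) (r : Fin n → ℤ), pairing u r = 0 →
        (LaurentAlg' n).map (Dop u r) ≤ LaurentAlg' n) ∧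
    (∀ (u : Fin n → ℂ) (r : Fin n → ℤ), pairing u r = 0 →
        Dop u r (Finsupp.single 0 1) = 0) ∧
    (LaurentAlg' n ⊔ Submodule.span ℂ {Finsupp.single 0 1} = ⊤) ∧
    (LaurentAlg' n ⊓ Submodule.span ℂ {Finsupp.single 0 1} = ⊥) ∧
    (∀ N : Submodule ℂ (LaurentAlg n), N ≤ LaurentAlg' n → N ≠ ⊥ →
      (∀ (u : Fin n → ℂ) (r : Fin n → ℤ), pairing u r = 0 → N.map (Dop u r) ≤ N) →
      N = LaurentAlg' n) := by
  classical
  refine ⟨?_, ?_, ?_, ?_, ?_⟩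
  · -- invariance of Aₙ'
    intro u r hur
    rw [Submodule.map_le_iff_le_comap]
    conv_lhs => rw [LaurentAlg']
    rw [Submodule.span_le]
    rintro f ⟨sv, hs, rfl⟩
    rw [SetLike.mem_coe, Submodule.mem_comap, Dop_single, mem_A']
    by_cases h : r + sv = 0
    · have hsv : sv = -r := by
        have := neg_eq_of_add_eq_zero_right h
        rw [← this]
      rw [hsv, pairing_neg, hur, neg_zero, zero_smul, Finsupp.coe_zero, Pi.zero_apply]
    · rw [Finsupp.smul_apply, Finsupp.single_apply, if_neg h, smul_zero]
  · -- triviality of ℂ·1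
    intro u r hur
    rw [Dop_single, pairing_zero, zero_smul]
  · -- sup = ⊤
    rw [eq_top_iff]
    rintro f -
    rw [← Finsupp.sum_single f, Finsupp.sum]
    apply Submodule.sum_mem
    intro a ha
    by_cases ha0 : a = 0
    · subst ha0
      apply Submodule.mem_sup_right
      rw [Submodule.mem_span_singleton]
      exact ⟨f 0, by rw [Finsupp.smul_single, smul_eq_mul, mul_one]⟩
    · apply Submodule.mem_sup_left
      rw [mem_A', Finsupp.single_apply, if_neg ha0]
  · -- inf = ⊥
    rw [eq_bot_iff]
    intro f hf
    rw [Submodule.mem_inf] at hf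
    obtain ⟨h1, h2⟩ := hf
    rw [mem_A'] at h1
    obtain ⟨c, hc⟩ := Submodule.mem_span_singleton.mp h2
    rw [Submodule.mem_bot, ← hc]
    have hc0 : c = 0 := by
      have := congrArg (fun g : LaurentAlg n => g 0) hc
      simpa [h1] using this
    rw [hc0, zero_smul]
  · -- simplicity
    intro N hNle hNbot hNinv
    refine le_antisymm hNle ?_
    obtain ⟨f, hfN, hf0⟩ := Submodule.ne_bot_iff N |>.mp hNbot
    obtain ⟨s, hs⟩ := Finsupp.support_nonempty_iff.mpr hf0
    have hfs : f s ≠ 0 := Finsupp.mem_support_iff.mp hs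
    have hs0 : s ≠ 0 := by
      intro h
      apply hfs
      rw [h]
      exact (mem_A' f).mp (hNle hfN)
    have hsingle : Finsupp.single s (f s) ∈ N :=
      extract_lemma N hNinv f.support.card f le_rfl hfN s
    have hone : Finsupp.single s (1 : ℂ) ∈ N := by
      have := N.smul_mem (f s)⁻¹ hsingle
      rwa [Finsupp.smul_single, smul_eq_mul, inv_mul_cancel₀ hfs] at this
    rw [LaurentAlg', Submodule.span_le]
    rintro g ⟨t, ht0, rfl⟩
    exact chain_lemma hn N hNinv hs0 ht0 hone
end

section
/- Let V be a finite-dimensional simple 𝔰𝔩_n(ℂ)-module with highest weight λ = Σ_{d=1}^{n−1} a_d δ_d (a_d ∈ ℤ_{≥0}), and suppose λ ≠ δ_d for every d = 0, 1, ..., n−1 (where δ_0 = 0). Then there exist indices 1 ≤ t' ≠ t ≤ n such that E_{t',t}^2 v ≠ 0 for some highest weight vector v of V. -/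
/-!
The matrices `E = E_{0,n-1}`, `F = E_{n-1,0}` and `H = E_{0,0} - E_{n-1,n-1}` form an `𝔰𝔩₂`-triple,
and `H = ∑_{d < n-1} (E_{d,d} - E_{d+1,d+1})` acts on the highest weight vector `v` by
`m = ∑_d a_d ≥ 2`. So `v` is a primitive vector of weight `m` for the image of this triple, and
`𝔰𝔩₂`-theory gives `F^i v ≠ 0` for all `i ≤ m`, in particular for `i = 2`.
-/

open Matrix

lemma IsSl2Triple.map_of_lie_eq {R L L' : Type*} [CommRing R] [LieRing L] [LieAlgebra R L]
    [LieRing L'] [LieAlgebra R L'] {h e f : L} (t : IsSl2Triple h e f) (φ : L →ₗ[R] L')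
    (hef : φ ⁅e, f⁆ = ⁅φ e, φ f⁆) (hhe : φ ⁅h, e⁆ = ⁅φ h, φ e⁆) (hhf : φ ⁅h, f⁆ = ⁅φ h, φ f⁆)
    (hh : φ h ≠ 0) : IsSl2Triple (φ h) (φ e) (φ f) where
  h_ne_zero := hh
  lie_e_f := by rw [← hef, t.lie_e_f]
  lie_h_e_nsmul := by rw [← hhe, t.lie_h_e_nsmul, map_nsmul]
  lie_h_f_nsmul := by rw [← hhf, t.lie_h_f_nsmul, map_neg, map_nsmul]

section AssociativeLie

attribute [local instance] LieRing.ofAssociativeRing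

namespace Matrix

variable {ι : Type*} [Fintype ι] [DecidableEq ι]

lemma isSl2Triple_single {R : Type*} [CommRing R] [Nontrivial R] {i j : ι} (hij : i ≠ j) :
    IsSl2Triple (L := Matrix ι ι R) (single i i 1 - single j j 1) (single i j 1) (single j i 1)
    where
  h_ne_zero := by
    intro h
    simpa [single_apply, hij.symm] using congrFun (congrFun h i) i
  lie_e_f := by simp [Ring.lie_def, single_mul_single_same]
  lie_h_e_nsmul := by
    simp only [Ring.lie_def, sub_mul, mul_sub, single_mul_single_same,
      single_mul_single_of_ne _ _ _ _ hij.symm, mul_one]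
    module
  lie_h_f_nsmul := by
    simp only [Ring.lie_def, sub_mul, mul_sub, single_mul_single_same,
      single_mul_single_of_ne _ _ _ _ hij, mul_one]
    module

lemma apply_single_apply_single_ne_zero {K V : Type*} [Field K] [CharZero K] [AddCommGroup V]
    [Module K V] (ρ : Matrix ι ι K →ₗ[K] Module.End K V)
    (hρ : ∀ A B : Matrix ι ι K, A.trace = 0 → B.trace = 0 → ρ ⁅A, B⁆ = ⁅ρ A, ρ B⁆)
    {i j : ι} (hij : i ≠ j) {v : V} (hv : v ≠ 0) (he : ρ (single i j 1) v = 0) {m : ℕ}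
    (hm : 2 ≤ m) (hh : ρ (single i i 1 - single j j 1) v = (m : K) • v) :
    ρ (single j i 1) (ρ (single j i 1) v) ≠ 0 := by
  have htrE := trace_single_eq_of_ne i j (1 : K) hij
  have htrF := trace_single_eq_of_ne j i (1 : K) hij.symm
  have htrH : trace (single i i (1 : K) - single j j 1) = 0 := by
    simp [trace_sub, trace_single_eq_same]
  have hρh : ρ (single i i 1 - single j j 1) ≠ 0 := fun h0 ↦ by
    simp [h0, eq_comm (a := (0 : V)), hv] at hh; omega
  have t := (isSl2Triple_single hij).map_of_lie_eq ρ (hρ _ _ htrE htrF) (hρ _ _ htrH htrE)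
    (hρ _ _ htrH htrF) hρh
  have P : t.HasPrimitiveVectorWith v (m : K) := ⟨hv, hh, he⟩
  simpa [sq] using P.pow_toEnd_f_ne_zero_of_eq_nat rfl hm

end Matrix

end AssociativeLie

lemma apply_single_zero_sub_single_eq_sum_smul {R V : Type*} [CommRing R] [AddCommGroup V]
    [Module R V] {n : ℕ} (ρ : Matrix (Fin n) (Fin n) R →ₗ[R] Module.End R V) (v : V)
    (a : ℕ → R) (hwt : ∀ (d : ℕ) (hd : d + 1 < n),
      ρ (single ⟨d, d.lt_of_succ_lt hd⟩ ⟨d, d.lt_of_succ_lt hd⟩ (1 : R) -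
        single ⟨d + 1, hd⟩ ⟨d + 1, hd⟩ 1) v = a d • v)
    (k : ℕ) (hk : k < n) :
    ρ (single ⟨0, k.zero_lt_of_lt hk⟩ ⟨0, k.zero_lt_of_lt hk⟩ (1 : R) -
        single ⟨k, hk⟩ ⟨k, hk⟩ 1) v = (∑ d ∈ Finset.range k, a d) • v := by
  induction k with
  | zero => simp
  | succ k ih =>
    rw [← sub_add_sub_cancel _ (single ⟨k, by omega⟩ ⟨k, by omega⟩ (1 : R)), map_add,
      LinearMap.add_apply, ih, hwt k hk, Finset.sum_range_succ, add_smul]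

/-- Let `V` be a finite-dimensional simple `𝔰𝔩ₙ(ℂ)`-module (given by a linear map `ρ`
preserving brackets of traceless matrices) with highest weight vector `v` of highest weight
`λ = ∑_d a_d δ_d` (so `(E_{d,d} − E_{d+1,d+1}) v = a_d v` in 0-indexed notation, and
`E_{ij} v = 0` for `i < j`).  If `λ ≠ δ_d` for all `d = 0, 1, ..., n−1` — equivalently
`∑_d a_d ≥ 2` — then there are indices `t' ≠ t` with `E_{t',t}² v ≠ 0`. -/
theorem sq_of_matrix_unit_nonzero_on_hwv (n : ℕ) (hn : 2 ≤ n)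
    (V : Type*) [AddCommGroup V] [Module ℂ V]
    (ρ : Matrix (Fin n) (Fin n) ℂ →ₗ[ℂ] Module.End ℂ V)
    (hρ : ∀ A B : Matrix (Fin n) (Fin n) ℂ, A.trace = 0 → B.trace = 0 →
      ρ ⁅A, B⁆ = ⁅ρ A, ρ B⁆)
    (v : V) (hv : v ≠ 0)
    (hhw : ∀ i j : Fin n, i < j → ρ (Matrix.single i j (1 : ℂ)) v = 0)
    (a : ℕ → ℕ)
    (hwt : ∀ (d : ℕ) (hd : d + 1 < n),
      ρ (Matrix.single ⟨d, by omega⟩ ⟨d, by omega⟩ (1 : ℂ) -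
          Matrix.single ⟨d + 1, hd⟩ ⟨d + 1, hd⟩ (1 : ℂ)) v = (a d : ℂ) • v)
    (hsum : 2 ≤ ∑ d ∈ Finset.range (n - 1), a d) :
    ∃ t' t : Fin n, t' ≠ t ∧
      ρ (Matrix.single t' t (1 : ℂ)) (ρ (Matrix.single t' t (1 : ℂ)) v) ≠ 0 := by
  let i : Fin n := ⟨0, by omega⟩
  let j : Fin n := ⟨n - 1, by omega⟩
  have hij : i ≠ j := by simp [i, j, Fin.ext_iff]; omega
  have hHv : ρ (single i i 1 - single j j 1) v =
      ((∑ d ∈ Finset.range (n - 1), a d : ℕ) : ℂ) • v := by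
    simpa using apply_single_zero_sub_single_eq_sum_smul ρ v (fun d ↦ (a d : ℂ)) hwt _ _
  refine ⟨j, i, hij.symm, apply_single_apply_single_ne_zero ρ hρ hij hv ?_ hsum hHv⟩
  exact hhw i j (by simp [i, j, Fin.lt_def]; omega)
end

section
/- Let V be a simple weight 𝔤𝔩_n(ℂ)-module with weight decomposition V = ⊕_{μ ∈ ℤ^n} V_{λ+μ} for some λ ∈ ℂ^n, and let P be a 𝒦_n-module. Then the linear map φ : P ⊗ V → P^{λ̃} ⊗ V given by p ⊗ v_μ ↦ (x^{−μ} p) ⊗ v_μ for v_μ ∈ V_{λ+μ} is an isomorphism of W_n-modules, where the source carries the action D(u,r)(z ⊗ y) = D(u,r)z ⊗ y + x^r z ⊗ (ruᵀ)y and the target carries the action (x^{r−e_j}∂_j)∘(p ⊗ w) = (x^{r−e_j}∂_j)p ⊗ w + Σ_i r_i (x^{r−e_i}p) ⊗ E_{ij}w. -/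
open TensorProduct

/-- The generator `x^{r−e_j}∂_j` of `Wₙ` acting on `ℱ(P,V) = P ⊗ V` by
`D(u,r')(z ⊗ y) = D(u,r')z ⊗ y + x^{r'} z ⊗ (r'uᵀ)y` with `u = e_j`, `r' = r − e_j`. -/
noncomputable def actF {n : ℕ} {P V : Type*} [AddCommGroup P] [Module ℂ P]
    [AddCommGroup V] [Module ℂ V] (K : WeylModule n P)
    (ρ : Matrix (Fin n) (Fin n) ℂ →ₗ[ℂ] Module.End ℂ V)
    (r : Fin n → ℤ) (j : Fin n) : Module.End ℂ (P ⊗[ℂ] V) :=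
  TensorProduct.map (K.D (Pi.single j 1) (r - Pi.single j 1)) LinearMap.id +
    TensorProduct.map (K.X (r - Pi.single j 1))
      (ρ (Matrix.vecMulVec (fun i => (((r - Pi.single j 1 : Fin n → ℤ)) i : ℂ)) (Pi.single j 1)))

/-- The generator `x^{r−e_j}∂_j` of `Wₙ` acting on `F(P^{λ̃},V)` by
`(x^{r−e_j}∂_j)∘(p ⊗ w) = (x^{r−e_j}(∂_j − λ_j))p ⊗ w + ∑ᵢ rᵢ (x^{r−e_i}p) ⊗ E_{ij}w`,
where the `𝒦ₙ`-action on `P^{λ̃}` is twisted by `λ̃ : x^α ↦ x^α, ∂_j ↦ ∂_j − λ_j`. -/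
noncomputable def actFtw {n : ℕ} {P V : Type*} [AddCommGroup P] [Module ℂ P]
    [AddCommGroup V] [Module ℂ V] (K : WeylModule n P)
    (ρ : Matrix (Fin n) (Fin n) ℂ →ₗ[ℂ] Module.End ℂ V) (lam : Fin n → ℂ)
    (r : Fin n → ℤ) (j : Fin n) : Module.End ℂ (P ⊗[ℂ] V) :=
  TensorProduct.map (K.X (r - Pi.single j 1) * (K.pd j - lam j • 1)) LinearMap.id +
    ∑ i : Fin n, (r i : ℂ) •
      TensorProduct.map (K.X (r - Pi.single i 1)) (ρ (Matrix.single i j (1 : ℂ)))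

namespace WeylModule

variable {n : ℕ} {P : Type*} [AddCommGroup P] [Module ℂ P] (K : WeylModule n P)

lemma X_apply_X (a b : Fin n → ℤ) (p : P) : K.X a (K.X b p) = K.X (a + b) p := by
  rw [K.X_add]; rfl

lemma X_mul_X_neg (r : Fin n → ℤ) : K.X r * K.X (-r) = 1 := by
  rw [← K.X_add, add_neg_cancel, K.X_zero]

lemma X_neg_mul_X (r : Fin n → ℤ) : K.X (-r) * K.X r = 1 := by
  rw [← K.X_add, neg_add_cancel, K.X_zero]

noncomputable def XEquiv (r : Fin n → ℤ) : P ≃ₗ[ℂ] P :=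
  LinearEquiv.ofLinearMap (K.X r) (K.X (-r)) (K.X_mul_X_neg r) (K.X_neg_mul_X r)

lemma D_single (r : Fin n → ℤ) (j : Fin n) : K.D (Pi.single j 1) r = K.X r * K.pd j := by
  simp [D, Pi.single_apply]

lemma pd_sub_smul_mul_X (j : Fin n) (c : ℂ) (s : Fin n → ℤ) :
    (K.pd j - c • 1) * K.X s = K.X s * (K.pd j - (c - s j) • 1) := by
  rw [sub_mul, K.pd_X, smul_mul_assoc, one_mul, sub_smul, mul_sub, mul_sub, mul_add,
    mul_smul_comm, mul_smul_comm, mul_one]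
  abel

end WeylModule

namespace Matrix

variable {n α : Type*} [Fintype n] [DecidableEq n]

lemma vecMulVec_single_one_eq_sum [Semiring α] (c : n → α) (j : n) :
    vecMulVec c (Pi.single j 1) = ∑ i, c i • single i j (1 : α) := by
  ext a b
  simp [vecMulVec_apply, sum_apply, single_apply, Pi.single_apply, eq_comm, ite_and]

lemma commute_single_diag [CommSemiring α] (i k : n) :
    Commute (single i i (1 : α)) (single k k 1) := by
  simp only [← diagonal_single]
  exact commute_diagonal _ _

lemma lie_single_diag_single [Ring α] (k i j : n) :
    ⁅single k k (1 : α), single i j (1 : α)⁆ =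
      ((Pi.single i 1 - Pi.single j 1 : n → ℤ) k : α) • single i j (1 : α) := by
  rw [Ring.lie_def]
  by_cases hi : k = i <;> by_cases hj : k = j
  · subst hi hj; simp
  · subst hi; simp [hj, Ne.symm hj]
  · subst hj; simp [hi]
  · simp [hi, hj, Ne.symm hj]

end Matrix

namespace DirectSum.IsInternal

variable {R ι P Q V : Type*} [CommSemiring R] [DecidableEq ι]
  [AddCommMonoid P] [Module R P] [AddCommMonoid Q] [Module R Q] [AddCommMonoid V] [Module R V]
  {W : ι → Submodule R V}

noncomputable def rTensorPiecewise (hW : IsInternal W) (f : ι → P ≃ₗ[R] Q) :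
    (P ⊗[R] V) ≃ₗ[R] (Q ⊗[R] V) :=
  let e := LinearEquiv.ofBijective (DirectSum.coeLinearMap W) hW
  TensorProduct.congr (.refl R P) e.symm ≪≫ₗ
    TensorProduct.directSumRight R R P (fun i => W i) ≪≫ₗ
    DFinsupp.mapRange.linearEquiv (fun i => TensorProduct.congr (f i) (.refl R (W i))) ≪≫ₗ
    (TensorProduct.directSumRight R R Q (fun i => W i)).symm ≪≫ₗ
    TensorProduct.congr (.refl R Q) e

lemma rTensorPiecewise_tmul (hW : IsInternal W) (f : ι → P ≃ₗ[R] Q) {i : ι} {v : V}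
    (hv : v ∈ W i) (p : P) : hW.rTensorPiecewise f (p ⊗ₜ v) = f i p ⊗ₜ v := by
  have he : (LinearEquiv.ofBijective (DirectSum.coeLinearMap W) hW).symm v =
      DirectSum.lof R ι (fun i => W i) i ⟨v, hv⟩ := by
    rw [LinearEquiv.symm_apply_eq, DirectSum.lof_eq_of]
    exact (DirectSum.coeLinearMap_of W i ⟨v, hv⟩).symm
  have hmap : ∀ x : P ⊗[R] W i, DFinsupp.mapRange.linearEquiv
      (fun i => TensorProduct.congr (f i) (.refl R (W i))) (DirectSum.lof R ι _ i x) =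
      DirectSum.lof R ι _ i (TensorProduct.congr (f i) (.refl R (W i)) x) :=
    fun _ => DFinsupp.mapRange_single (hf := fun _ => map_zero _)
  simp only [rTensorPiecewise, LinearEquiv.trans_apply, TensorProduct.congr_tmul,
    LinearEquiv.refl_apply, he, TensorProduct.directSumRight_tmul_lof, hmap]
  rw [TensorProduct.directSumRight_symm_lof_tmul, TensorProduct.congr_tmul, DirectSum.lof_eq_of]
  exact congrArg _ (DirectSum.coeLinearMap_of W i ⟨v, hv⟩)

end DirectSum.IsInternal

lemma TensorProduct.ext_of_span_eq_top {R M N Q : Type*} [CommSemiring R]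
    [AddCommMonoid M] [Module R M] [AddCommMonoid N] [Module R N] [AddCommMonoid Q] [Module R Q]
    {s : Set N} (hs : Submodule.span R s = ⊤) {f g : M ⊗[R] N →ₗ[R] Q}
    (h : ∀ m, ∀ n ∈ s, f (m ⊗ₜ n) = g (m ⊗ₜ n)) : f = g :=
  TensorProduct.ext <| LinearMap.ext fun m => LinearMap.ext_on hs fun n hn => h m n hn

section WeightSpace

open Matrix

variable {n : ℕ} {V : Type*} [AddCommGroup V] [Module ℂ V]
  {ρ : Matrix (Fin n) (Fin n) ℂ →ₗ[ℂ] Module.End ℂ V} {lam : Fin n → ℂ}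

variable (ρ lam) in
def glWeightSpace (μ : Fin n → ℤ) : Submodule ℂ V :=
  ⨅ i, Module.End.eigenspace (ρ (single i i 1)) (lam i + μ i)

lemma mem_glWeightSpace_iff {μ : Fin n → ℤ} {v : V} :
    v ∈ glWeightSpace ρ lam μ ↔ ∀ i, ρ (single i i 1) v = (lam i + μ i) • v := by
  simp [glWeightSpace, Submodule.mem_iInf]

lemma commute_map_single_diag (hρ : ∀ A B, ρ ⁅A, B⁆ = ⁅ρ A, ρ B⁆) (i k : Fin n) :
    Commute (ρ (single i i 1)) (ρ (single k k 1)) := by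
  rw [commute_iff_lie_eq, ← hρ, commute_iff_lie_eq.mp (commute_single_diag i k), map_zero]

lemma map_single_mem_glWeightSpace (hρ : ∀ A B, ρ ⁅A, B⁆ = ⁅ρ A, ρ B⁆) {μ : Fin n → ℤ} {v : V}
    (hv : v ∈ glWeightSpace ρ lam μ) (i j : Fin n) :
    ρ (single i j 1) v ∈ glWeightSpace ρ lam (μ + Pi.single i 1 - Pi.single j 1) := by
  rw [mem_glWeightSpace_iff] at hv ⊢
  intro k
  have hlie : ρ (single k k 1) (ρ (single i j 1) v) - ρ (single i j 1) (ρ (single k k 1) v) =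
      ((Pi.single i 1 - Pi.single j 1 : Fin n → ℤ) k : ℂ) • ρ (single i j 1) v := by
    have := LinearMap.congr_fun (hρ (single k k 1) (single i j 1)) v
    rw [lie_single_diag_single, map_smul, Ring.lie_def] at this
    exact this.symm
  rw [hv k, map_smul] at hlie
  rw [add_sub_assoc, Pi.add_apply, Int.cast_add, ← add_assoc, add_smul, ← hlie]
  abel

lemma iSupIndep_glWeightSpace (hρ : ∀ A B, ρ ⁅A, B⁆ = ⁅ρ A, ρ B⁆) :
    iSupIndep (glWeightSpace ρ lam) := by
  have hmax : iSupIndep fun χ : Fin n → ℂ =>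
      ⨅ i, Module.End.maxGenEigenspace (ρ (single i i 1)) (χ i) :=
    Module.End.independent_iInf_maxGenEigenspace_of_forall_mapsTo _
      fun i k χ => Module.End.mapsTo_maxGenEigenspace_of_comm
        (commute_map_single_diag hρ k i) χ
  have hinj : Function.Injective fun μ : Fin n → ℤ => fun i => lam i + (μ i : ℂ) :=
    fun a b hab => funext fun i => by simpa using congrFun hab i
  exact (hmax.comp hinj).mono fun μ => iInf_mono fun i =>
    (Module.End.genEigenspace _ _).monotone le_top

lemma isInternal_glWeightSpace (hρ : ∀ A B, ρ ⁅A, B⁆ = ⁅ρ A, ρ B⁆)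
    (hweight : Submodule.span ℂ
      {v : V | ∃ μ : Fin n → ℤ, ∀ i : Fin n, ρ (single i i 1) v = (lam i + (μ i : ℂ)) • v} = ⊤) :
    DirectSum.IsInternal (glWeightSpace ρ lam) := by
  refine DirectSum.isInternal_submodule_of_iSupIndep_of_iSup_eq_top
    (iSupIndep_glWeightSpace hρ) ?_
  rw [← top_le_iff, ← hweight, Submodule.span_le]
  rintro v ⟨μ, hv⟩
  exact Submodule.mem_iSup_of_mem μ (mem_glWeightSpace_iff.mpr hv)

end WeightSpace

section Intertwining

open Matrix

variable {n : ℕ} {P V : Type*} [AddCommGroup P] [Module ℂ P] [AddCommGroup V] [Module ℂ V]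
  (K : WeylModule n P) {ρ : Matrix (Fin n) (Fin n) ℂ →ₗ[ℂ] Module.End ℂ V}

lemma actF_tmul (r : Fin n → ℤ) (j : Fin n) (p : P) (v : V) :
    actF K ρ r j (p ⊗ₜ v) = K.X (r - Pi.single j 1) (K.pd j p) ⊗ₜ v +
      ∑ i, ((r - Pi.single j 1 : Fin n → ℤ) i : ℂ) •
        (K.X (r - Pi.single j 1) p ⊗ₜ ρ (single i j 1) v) := by
  simp only [actF, LinearMap.add_apply, TensorProduct.map_tmul, K.D_single,
    vecMulVec_single_one_eq_sum, map_sum, map_smul, LinearMap.sum_apply, LinearMap.smul_apply,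
    TensorProduct.tmul_sum, TensorProduct.tmul_smul, Module.End.mul_apply, LinearMap.id_apply]

lemma actFtw_tmul (lam : Fin n → ℂ) (r : Fin n → ℤ) (j : Fin n) (p : P) (w : V) :
    actFtw K ρ lam r j (p ⊗ₜ w) = K.X (r - Pi.single j 1) ((K.pd j - lam j • 1) p) ⊗ₜ w +
      ∑ i, (r i : ℂ) • (K.X (r - Pi.single i 1) p ⊗ₜ ρ (single i j 1) w) := by
  simp [actFtw]

variable {lam : Fin n → ℂ}

lemma map_actF_tmul_of_mem (hρ : ∀ A B, ρ ⁅A, B⁆ = ⁅ρ A, ρ B⁆)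
    {φ : P ⊗[ℂ] V →ₗ[ℂ] P ⊗[ℂ] V}
    (hφ : ∀ μ p v, v ∈ glWeightSpace ρ lam μ → φ (p ⊗ₜ v) = K.X (-μ) p ⊗ₜ v)
    (r : Fin n → ℤ) (j : Fin n) (p : P) {μ : Fin n → ℤ} {v : V}
    (hv : v ∈ glWeightSpace ρ lam μ) :
    φ (actF K ρ r j (p ⊗ₜ v)) = actFtw K ρ lam r j (φ (p ⊗ₜ v)) := by
  set T : Fin n → P ⊗[ℂ] V := fun i => K.X (r - Pi.single i 1 - μ) p ⊗ₜ ρ (single i j 1) v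
  have hL : φ (actF K ρ r j (p ⊗ₜ v)) = K.X (r - Pi.single j 1 - μ) (K.pd j p) ⊗ₜ v +
      ∑ i, ((r - Pi.single j 1 : Fin n → ℤ) i : ℂ) • T i := by
    rw [actF_tmul, map_add, map_sum, hφ μ _ _ hv, K.X_apply_X, neg_add_eq_sub]
    congr 1
    refine Finset.sum_congr rfl fun i _ => ?_
    rw [map_smul, hφ _ _ _ (map_single_mem_glWeightSpace hρ hv i j), K.X_apply_X,
      show -(μ + Pi.single i 1 - Pi.single j 1) + (r - Pi.single j 1) = r - Pi.single i 1 - μ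
        by abel]
  have hR : actFtw K ρ lam r j (φ (p ⊗ₜ v)) =
      K.X (r - Pi.single j 1 - μ) (K.pd j p) ⊗ₜ v -
        (lam j + μ j) • (K.X (r - Pi.single j 1 - μ) p ⊗ₜ v) + ∑ i, (r i : ℂ) • T i := by
    rw [hφ μ p v hv, actFtw_tmul]
    congr 1
    · rw [← Module.End.mul_apply (K.pd j - lam j • 1), K.pd_sub_smul_mul_X,
        Module.End.mul_apply, K.X_apply_X, ← sub_eq_add_neg]
      simp only [Pi.neg_apply, Int.cast_neg, sub_neg_eq_add, LinearMap.sub_apply,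
        LinearMap.smul_apply, Module.End.one_apply, map_sub, map_smul, TensorProduct.sub_tmul,
        TensorProduct.smul_tmul']
    · refine Finset.sum_congr rfl fun i _ => ?_
      rw [K.X_apply_X, ← sub_eq_add_neg]
  have hT : T j = (lam j + μ j) • (K.X (r - Pi.single j 1 - μ) p ⊗ₜ v) := by
    simp [T, mem_glWeightSpace_iff.mp hv j, TensorProduct.tmul_smul]
  have hsum :
      ∑ i, (r i : ℂ) • T i = ∑ i, ((r - Pi.single j 1 : Fin n → ℤ) i : ℂ) • T i + T j := by
    simp [Pi.single_apply, sub_smul, Finset.sum_sub_distrib, ite_smul]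
  rw [hL, hR, hsum, hT]
  abel

end Intertwining

theorem F_iso_twisted_general (n : ℕ) (P V : Type*) [AddCommGroup P] [Module ℂ P]
    [AddCommGroup V] [Module ℂ V] (K : WeylModule n P)
    (ρ : Matrix (Fin n) (Fin n) ℂ →ₗ[ℂ] Module.End ℂ V)
    (hρ : ∀ A B : Matrix (Fin n) (Fin n) ℂ, ρ ⁅A, B⁆ = ⁅ρ A, ρ B⁆)
    (lam : Fin n → ℂ)
    (hweight : Submodule.span ℂ
      {v : V | ∃ μ : Fin n → ℤ, ∀ i : Fin n,
        ρ (Matrix.single i i (1 : ℂ)) v = (lam i + (μ i : ℂ)) • v} = ⊤) :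
    ∃ φ : (P ⊗[ℂ] V) ≃ₗ[ℂ] (P ⊗[ℂ] V),
      (∀ (μ : Fin n → ℤ) (p : P) (v : V),
        (∀ i : Fin n, ρ (Matrix.single i i (1 : ℂ)) v = (lam i + (μ i : ℂ)) • v) →
        φ (p ⊗ₜ[ℂ] v) = K.X (-μ) p ⊗ₜ[ℂ] v) ∧
      (∀ (r : Fin n → ℤ) (j : Fin n) (z : P ⊗[ℂ] V),
        φ (actF K ρ r j z) = actFtw K ρ lam r j (φ z)) := by
  let φ := (isInternal_glWeightSpace hρ hweight).rTensorPiecewise fun μ => K.XEquiv (-μ)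
  have hφ : ∀ μ p v, v ∈ glWeightSpace ρ lam μ → φ (p ⊗ₜ v) = K.X (-μ) p ⊗ₜ v :=
    fun _ p _ hv => DirectSum.IsInternal.rTensorPiecewise_tmul _ _ hv p
  refine ⟨φ, fun μ p v hv => hφ μ p v (mem_glWeightSpace_iff.mpr hv), fun r j => ?_⟩
  have hcomm : φ.toLinearMap ∘ₗ actF K ρ r j = actFtw K ρ lam r j ∘ₗ φ.toLinearMap :=
    TensorProduct.ext_of_span_eq_top hweight fun p _ ⟨_, hv⟩ =>
      map_actF_tmul_of_mem K hρ hφ r j p (mem_glWeightSpace_iff.mpr hv)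
  exact LinearMap.congr_fun hcomm

/-- Let `V` be a simple weight `𝔤𝔩ₙ(ℂ)`-module with weights in `λ + ℤⁿ`, and `P` a
`𝒦ₙ`-module.  Then `p ⊗ v_μ ↦ (x^{−μ}p) ⊗ v_μ` (for `v_μ` of weight `λ + μ`) extends to
a linear isomorphism `φ : ℱ(P,V) → F(P^{λ̃},V)` intertwining the two `Wₙ`-actions. -/
theorem F_iso_twisted (n : ℕ) (P V : Type*) [AddCommGroup P] [Module ℂ P]
    [AddCommGroup V] [Module ℂ V] (K : WeylModule n P)
    (ρ : Matrix (Fin n) (Fin n) ℂ →ₗ[ℂ] Module.End ℂ V)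
    (hρ : ∀ A B : Matrix (Fin n) (Fin n) ℂ, ρ ⁅A, B⁆ = ⁅ρ A, ρ B⁆)
    (hsimple : ∀ W : Submodule ℂ V,
      (∀ A : Matrix (Fin n) (Fin n) ℂ, W.map (ρ A) ≤ W) → W = ⊥ ∨ W = ⊤)
    (lam : Fin n → ℂ)
    (hweight : Submodule.span ℂ
      {v : V | ∃ μ : Fin n → ℤ, ∀ i : Fin n,
        ρ (Matrix.single i i (1 : ℂ)) v = (lam i + (μ i : ℂ)) • v} = ⊤) :
    ∃ φ : (P ⊗[ℂ] V) ≃ₗ[ℂ] (P ⊗[ℂ] V),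
      (∀ (μ : Fin n → ℤ) (p : P) (v : V),
        (∀ i : Fin n, ρ (Matrix.single i i (1 : ℂ)) v = (lam i + (μ i : ℂ)) • v) →
        φ (p ⊗ₜ[ℂ] v) = K.X (-μ) p ⊗ₜ[ℂ] v) ∧
      (∀ (r : Fin n → ℤ) (j : Fin n) (z : P ⊗[ℂ] V),
        φ (actF K ρ r j z) = actFtw K ρ lam r j (φ z)) :=
  F_iso_twisted_general n P V K ρ hρ lam hweight
end

section
/- Let n ≥ 2, let P be a simple 𝒦_n-module, and suppose 𝔥P = P where 𝔥P = Σ_{i=1}^n ∂_i P. Then the 𝕊_n-module ℱ(P, V(δ_0)) = P ⊗ ℂ (with action D(u,r)(p⊗1) = D(u,r)p ⊗ 1) is irreducible. Conversely, if ℱ(P, V(δ_0)) is irreducible then 𝔥P = P. -/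
open TensorProduct

namespace WeylModule

variable {n : ℕ} {P : Type*} [AddCommGroup P] [Module ℂ P]

lemma X_zero_apply (K : WeylModule n P) (x : P) : K.X 0 x = x := by
  rw [K.X_zero]; rfl

lemma X_X (K : WeylModule n P) (r s : Fin n → ℤ) (x : P) :
    K.X r (K.X s x) = K.X (r + s) x := by
  rw [K.X_add]; rfl

lemma pd_X_apply (K : WeylModule n P) (i : Fin n) (r : Fin n → ℤ) (x : P) :
    K.pd i (K.X r x) = K.X r (K.pd i x) + (r i : ℂ) • K.X r x := by
  have h := congrArg (fun f : Module.End ℂ P => f x) (K.pd_X i r)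
  simpa [Module.End.mul_apply, LinearMap.add_apply, LinearMap.smul_apply,
    Module.End.one_apply, map_add, map_smul] using h

lemma pd_pd_apply (K : WeylModule n P) (i j : Fin n) (x : P) :
    K.pd i (K.pd j x) = K.pd j (K.pd i x) := by
  have h := congrArg (fun f : Module.End ℂ P => f x) (K.pd_comm i j)
  simpa [Module.End.mul_apply] using h

lemma D_apply (K : WeylModule n P) (u : Fin n → ℂ) (r : Fin n → ℤ) (x : P) :
    K.D u r x = K.X r (∑ i, u i • K.pd i x) := by
  simp [D, Module.End.mul_apply, LinearMap.sum_apply, LinearMap.smul_apply]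

lemma sum_single_smul (j : Fin n) (f : Fin n → P) :
    ∑ k, (Pi.single j (1:ℂ) : Fin n → ℂ) k • f k = f j := by
  rw [Finset.sum_eq_single j]
  · simp
  · intro k _ hk; simp [Pi.single_apply, hk]
  · intro h; exact absurd (Finset.mem_univ j) h

lemma pairing_single (j : Fin n) (s : Fin n → ℤ) :
    pairing (Pi.single j (1:ℂ) : Fin n → ℂ) s = (s j : ℂ) := by
  simp [pairing, Pi.single_apply, ite_mul]

lemma pairing_sub (a : Fin n → ℂ) (t s : Fin n → ℤ) :
    pairing a (t - s) = pairing a t - pairing a s := by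
  simp [pairing, Pi.sub_apply, mul_sub, Finset.sum_sub_distrib]

lemma pairing_sub_left (a b : Fin n → ℂ) (t : Fin n → ℤ) :
    pairing (a - b) t = pairing a t - pairing b t := by
  simp [pairing, Pi.sub_apply, sub_mul, Finset.sum_sub_distrib]

lemma pairing_smul_left (c : ℂ) (a : Fin n → ℂ) (t : Fin n → ℤ) :
    pairing (c • a) t = c * pairing a t := by
  simp [pairing, Finset.mul_sum, mul_assoc]

lemma pairing_zero_right (a : Fin n → ℂ) : pairing a (0 : Fin n → ℤ) = 0 := by
  simp [pairing]


lemma pairing_single' (j : Fin n) (c : ℂ) (s : Fin n → ℤ) :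
    pairing (Pi.single j c : Fin n → ℂ) s = c * (s j : ℂ) := by
  simp [pairing, Pi.single_apply, ite_mul]

lemma pairing_add_left (a b : Fin n → ℂ) (t : Fin n → ℤ) :
    pairing (a + b) t = pairing a t + pairing b t := by
  simp [pairing, Pi.add_apply, add_mul, Finset.sum_add_distrib]

lemma pairing_single_right (a : Fin n → ℂ) (k : Fin n) :
    pairing a (Pi.single k 1 : Fin n → ℤ) = a k := by
  rw [pairing, Finset.sum_eq_single k]
  · simp
  · intro l _ hl; simp [Pi.single_apply, hl]
  · intro h; exact absurd (Finset.mem_univ k) h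

end WeylModule

namespace WeylModule

variable {n : ℕ} {P : Type*} [AddCommGroup P] [Module ℂ P]

section Key

variable (K : WeylModule n P) {M : Submodule ℂ P}
variable (hM : ∀ (u : Fin n → ℂ) (r : Fin n → ℤ), pairing u r = 0 → ∀ p ∈ M, K.D u r p ∈ M)

include hM

lemma pd_mem (l : Fin n) {p : P} (hp : p ∈ M) : K.pd l p ∈ M := by
  have h := hM (Pi.single l 1) 0 (by simp [pairing]) p hp
  rwa [D_apply, X_zero_apply, sum_single_smul] at h

lemma keyB (hn : 2 ≤ n) (t : Fin n → ℤ) (i j : Fin n) {m : P} (hm : m ∈ M) :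
    K.pd i (K.X t (K.pd j m)) ∈ M := by
  by_cases ht : t = 0
  · subst ht
    rw [X_zero_apply]
    exact pd_mem K hM i (pd_mem K hM j hm)
  -- the element y and basic memberships
  set y := K.pd j m with hy_def
  have hy : y ∈ M := pd_mem K hM j hm
  -- T = ⟨t,t⟩ ≠ 0
  set T : ℂ := ∑ k, (t k : ℂ) * (t k : ℂ) with hT_def
  have hT : T ≠ 0 := by
    obtain ⟨k0, hk0⟩ := Function.ne_iff.1 ht
    have hz : (0 : ℤ) < ∑ k, t k * t k :=
      Finset.sum_pos' (fun k _ => mul_self_nonneg _)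
        ⟨k0, Finset.mem_univ k0, mul_self_pos.mpr hk0⟩
    have : T = ((∑ k, t k * t k : ℤ) : ℂ) := by rw [hT_def]; push_cast; ring
    rw [this]
    exact_mod_cast hz.ne'

  set τ : Fin n → ℂ := fun l => (t l : ℂ) / T with hτ_def
  have hτt : pairing τ t = 1 := by
    rw [pairing]
    have hq : ∀ l, τ l * (t l : ℂ) = (t l : ℂ) * (t l : ℂ) / T := by
      intro l; rw [hτ_def]; ring
    rw [Finset.sum_congr rfl fun l _ => hq l, ← Finset.sum_div, ← hT_def, div_self hT]
  obtain ⟨s, a, hsj, hats, hat⟩ :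
      ∃ (s : Fin n → ℤ) (a : Fin n → ℂ),
        s j = 0 ∧ pairing a (t - s) = 0 ∧ pairing a t = 1 := by
    by_cases htj : t j = 0
    · exact ⟨t, τ, htj, by rw [pairing_sub, sub_self], hτt⟩
    · obtain ⟨k, hkj⟩ : ∃ k : Fin n, k ≠ j :=
        Fintype.exists_ne_of_one_lt_card (by simpa using lt_of_lt_of_le one_lt_two hn) j
      have htjC : (t j : ℂ) ≠ 0 := by exact_mod_cast htj
      refine ⟨Pi.single k 1,
        Pi.single j ((1 - (t k : ℂ)) / (t j : ℂ)) + Pi.single k 1, ?_, ?_, ?_⟩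
      · exact Pi.single_eq_of_ne (Ne.symm hkj) 1
      · rw [pairing_sub, pairing_add_left, pairing_add_left,
          pairing_single_right, pairing_single_right, pairing_single', pairing_single',
          div_mul_cancel₀ _ htjC]
        simp [Pi.single_apply, hkj, Ne.symm hkj]
      · rw [pairing_add_left, pairing_single', pairing_single', div_mul_cancel₀ _ htjC]
        simp [Pi.single_apply, Ne.symm hkj]
  have has : pairing a s = 1 := by
    have h2 : pairing a t - pairing a s = 0 := by rw [← pairing_sub]; exact hats
    rw [← sub_eq_zero.mp h2]; exact hat
  -- step 1 : X_s y ∈ M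
  have m1 : K.X s y ∈ M := by
    have hpe : pairing (Pi.single j (1:ℂ) : Fin n → ℂ) s = 0 := by
      rw [pairing_single, hsj]; norm_num
    have h := hM _ s hpe m hm
    rwa [D_apply, sum_single_smul] at h
  -- step 2
  have m2 : K.X t (∑ l, a l • K.pd l y) + K.X t y ∈ M := by
    have h := hM a (t - s) hats _ m1
    rw [D_apply] at h
    have e1 : (∑ l, a l • K.pd l (K.X s y)) = K.X s (∑ l, a l • K.pd l y) + K.X s y := by
      calc (∑ l, a l • K.pd l (K.X s y))
          = ∑ l, (a l • K.X s (K.pd l y) + (a l * (s l : ℂ)) • K.X s y) := by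
            refine Finset.sum_congr rfl fun l _ => ?_
            rw [pd_X_apply, smul_add, smul_smul]
        _ = (∑ l, a l • K.X s (K.pd l y)) + (∑ l, (a l * (s l : ℂ))) • K.X s y := by
            rw [Finset.sum_add_distrib, Finset.sum_smul]
        _ = K.X s (∑ l, a l • K.pd l y) + K.X s y := by
            rw [show (∑ l, (a l * (s l : ℂ))) = 1 from has, one_smul, map_sum]
            congr 1
            exact Finset.sum_congr rfl fun l _ => (map_smul _ _ _).symm
    have hts : t - s + s = t := by abel
    rw [e1, map_add, X_X, X_X, hts] at h
    exact h
  -- step 3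
  have m3 : K.X t (∑ l, (a - τ) l • K.pd l y) ∈ M := by
    have hpa : pairing (a - τ) t = 0 := by
      rw [pairing_sub_left, hat, hτt, sub_self]
    have h := hM (a - τ) t hpa y hy
    rwa [D_apply] at h
  -- step 4
  have m4 : K.X t (∑ l, τ l • K.pd l y) + K.X t y ∈ M := by
    have h := M.sub_mem m2 m3
    have e3 : ∀ l, a l • K.pd l y - (a - τ) l • K.pd l y = τ l • K.pd l y := by
      intro l
      rw [Pi.sub_apply, ← sub_smul]
      congr 1
      ring
    have e2 : (K.X t (∑ l, a l • K.pd l y) + K.X t y) - K.X t (∑ l, (a - τ) l • K.pd l y)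
        = K.X t (∑ l, τ l • K.pd l y) + K.X t y := by
      rw [add_sub_right_comm, ← map_sub, ← Finset.sum_sub_distrib,
        Finset.sum_congr rfl fun l _ => e3 l]
    rwa [e2] at h
  -- step 5
  set w : Fin n → ℂ := (Pi.single i (1:ℂ)) - (t i : ℂ) • τ with hw_def
  have hwt : pairing w t = 0 := by
    rw [hw_def, pairing_sub_left, pairing_single, pairing_smul_left, hτt, mul_one, sub_self]
  have m5 : K.X t (∑ l, w l • K.pd l y) ∈ M := by
    have h := hM w t hwt y hy
    rwa [D_apply] at h
  -- conclusion
  have e4 : (∑ l, w l • K.pd l y) + (t i : ℂ) • (∑ l, τ l • K.pd l y) = K.pd i y := by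
    rw [Finset.smul_sum, ← Finset.sum_add_distrib]
    have e5 : ∀ l, w l • K.pd l y + (t i : ℂ) • (τ l • K.pd l y)
        = (Pi.single i (1:ℂ) : Fin n → ℂ) l • K.pd l y := by
      intro l
      rw [smul_smul, ← add_smul, hw_def, Pi.sub_apply, Pi.smul_apply, smul_eq_mul]
      congr 1; ring
    rw [Finset.sum_congr rfl fun l _ => e5 l, sum_single_smul]
  have egoal : K.pd i (K.X t y)
      = K.X t (∑ l, w l • K.pd l y) + (t i : ℂ) • (K.X t (∑ l, τ l • K.pd l y) + K.X t y) := by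
    rw [pd_X_apply]
    calc K.X t (K.pd i y) + (t i : ℂ) • K.X t y
        = K.X t ((∑ l, w l • K.pd l y) + (t i : ℂ) • (∑ l, τ l • K.pd l y))
            + (t i : ℂ) • K.X t y := by rw [e4]
      _ = _ := by
          rw [map_add, map_smul, smul_add]
          abel
  rw [egoal]
  exact M.add_mem m5 (M.smul_mem _ m4)

end Key

end WeylModule

lemma rid_map_natural {P : Type*} [AddCommGroup P] [Module ℂ P]
    (f : Module.End ℂ P) (x : P ⊗[ℂ] ℂ) :
    (TensorProduct.rid ℂ P) (TensorProduct.map f LinearMap.id x)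
      = f ((TensorProduct.rid ℂ P) x) := by
  induction x using TensorProduct.induction_on with
  | zero => simp
  | tmul p c => simp [TensorProduct.rid_tmul, map_smul]
  | add a b ha hb => simp [map_add, ha, hb]

/-- Let `n ≥ 2` and let `P` be a simple `𝒦ₙ`-module.  The `𝕊ₙ`-module
`ℱ(P,V(δ₀)) = P ⊗ ℂ` (with `V(δ₀) = ℂ` the trivial `𝔰𝔩ₙ`-module, so that
`D(u,r)·(p ⊗ 1) = (D(u,r)p) ⊗ 1`) is irreducible if and only if `𝔥P = P`, where
`𝔥P = ∑ᵢ ∂ᵢP`. -/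
theorem F_P_delta0_irreducible_iff (n : ℕ) (hn : 2 ≤ n)
    (P : Type*) [AddCommGroup P] [Module ℂ P] [Nontrivial P] (K : WeylModule n P)
    (hsimple : ∀ W : Submodule ℂ P, (∀ r, W.map (K.X r) ≤ W) →
      (∀ i, W.map (K.pd i) ≤ W) → W = ⊥ ∨ W = ⊤) :
    (⨆ i : Fin n, LinearMap.range (K.pd i)) = ⊤ ↔
      ((⊥ : Submodule ℂ (P ⊗[ℂ] ℂ)) ≠ ⊤ ∧
        ∀ N : Submodule ℂ (P ⊗[ℂ] ℂ),
          (∀ (u : Fin n → ℂ) (r : Fin n → ℤ), pairing u r = 0 →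
            N.map (TensorProduct.map (K.D u r) LinearMap.id) ≤ N) →
          N = ⊥ ∨ N = ⊤) := by
  set e := TensorProduct.rid ℂ P with he_def
  constructor
  · intro hsup
    constructor
    · -- ⊥ ≠ ⊤
      intro hbt
      obtain ⟨p, hp⟩ := exists_ne (0 : P)
      have h1 : e.symm p ∈ (⊥ : Submodule ℂ (P ⊗[ℂ] ℂ)) := hbt ▸ Submodule.mem_top
      have h0 : e.symm p = 0 := h1
      apply hp
      have := congrArg e h0
      rwa [LinearEquiv.apply_symm_apply, map_zero] at this
    · intro N hN
      set M : Submodule ℂ P := N.map e.toLinearMap with hM_def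
      have hM : ∀ (u : Fin n → ℂ) (r : Fin n → ℤ), pairing u r = 0 →
          ∀ p ∈ M, K.D u r p ∈ M := by
        intro u r hur p hp
        obtain ⟨x, hx, rfl⟩ := hp
        exact ⟨TensorProduct.map (K.D u r) LinearMap.id x,
          hN u r hur ⟨x, hx, rfl⟩, rid_map_natural _ _⟩
      by_cases hMbot : M = ⊥
      · left
        rw [eq_bot_iff]
        intro x hx
        have hex : e x ∈ M := ⟨x, hx, rfl⟩
        rw [hMbot, Submodule.mem_bot] at hex
        have : x = 0 := by
          have := congrArg e.symm hex
          rwa [LinearEquiv.symm_apply_apply, map_zero] at this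
        simp [this]
      · right
        -- show M = ⊤ first
        have hMtop : M = ⊤ := by
          by_cases hexq : ∃ (j : Fin n) (m : P), m ∈ M ∧ K.pd j m ≠ 0
          · obtain ⟨j, m, hm, hq⟩ := hexq
            set U : Submodule ℂ P :=
              ⨅ (i : Fin n), ⨅ (t : Fin n → ℤ),
                Submodule.comap ((K.pd i) ∘ₗ (K.X t)) M with hU_def
            have hUmem : ∀ x : P, x ∈ U ↔
                ∀ (i : Fin n) (t : Fin n → ℤ), K.pd i (K.X t x) ∈ M := by
              intro x
              simp [hU_def, Submodule.mem_iInf, Submodule.mem_comap, LinearMap.comp_apply]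
            have hqU : K.pd j m ∈ U :=
              (hUmem _).2 fun i t => K.keyB hM hn t i j hm
            have hUX : ∀ r, U.map (K.X r) ≤ U := by
              rintro r x ⟨z, hz, rfl⟩
              refine (hUmem _).2 fun i t => ?_
              rw [WeylModule.X_X]
              exact (hUmem z).1 hz i (t + r)
            have hUpd : ∀ l, U.map (K.pd l) ≤ U := by
              rintro l x ⟨z, hz, rfl⟩
              refine (hUmem _).2 fun i t => ?_
              have e2 : K.pd i (K.X t (K.pd l z))
                  = K.pd l (K.pd i (K.X t z)) - (t l : ℂ) • K.pd i (K.X t z) := by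
                have h1 : K.X t (K.pd l z) = K.pd l (K.X t z) - (t l : ℂ) • K.X t z := by
                  rw [WeylModule.pd_X_apply]; abel
                rw [h1, map_sub, map_smul, WeylModule.pd_pd_apply]
              rw [e2]
              exact M.sub_mem (K.pd_mem hM l ((hUmem z).1 hz i t))
                (M.smul_mem _ ((hUmem z).1 hz i t))
            have hUtop : U = ⊤ := by
              rcases hsimple U hUX hUpd with h | h
              · exact absurd (h ▸ hqU) (by simpa using hq)
              · exact h
            rw [eq_top_iff, ← hsup]
            refine iSup_le fun i => ?_
            rintro x ⟨z, rfl⟩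
            have := (hUmem z).1 (hUtop ▸ Submodule.mem_top) i 0
            rwa [WeylModule.X_zero_apply] at this
          · -- degenerate case: pd kills M, derive contradiction with hsup
            push_neg at hexq
            obtain ⟨p, hpM, hp0⟩ := (Submodule.ne_bot_iff M).1 hMbot
            have hpdp : ∀ l, K.pd l p = 0 := fun l => hexq l p hpM
            set V : Submodule ℂ P :=
              Submodule.span ℂ (Set.range fun t : Fin n → ℤ => K.X t p) with hV_def
            have hVX : ∀ r, V.map (K.X r) ≤ V := by
              intro r
              rw [hV_def, Submodule.map_span]
              refine Submodule.span_le.2 ?_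
              rintro x ⟨y, ⟨t, rfl⟩, rfl⟩
              exact Submodule.subset_span ⟨r + t, (K.X_X r t p).symm⟩
            have hVpd : ∀ l, V.map (K.pd l) ≤ V := by
              intro l
              rw [hV_def, Submodule.map_span]
              refine Submodule.span_le.2 ?_
              rintro x ⟨y, ⟨t, rfl⟩, rfl⟩
              have : K.pd l (K.X t p) = (t l : ℂ) • K.X t p := by
                rw [WeylModule.pd_X_apply, hpdp, map_zero, zero_add]
              rw [this]
              exact Submodule.smul_mem _ _ (Submodule.subset_span ⟨t, rfl⟩)
            have hVtop : V = ⊤ := by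
              rcases hsimple V hVX hVpd with h | h
              · exfalso
                apply hp0
                have : p ∈ V := by
                  have : p = K.X 0 p := (K.X_zero_apply p).symm
                  rw [this]
                  exact Submodule.subset_span ⟨0, rfl⟩
                rw [h, Submodule.mem_bot] at this
                exact this
              · exact h
            -- p lies in the span of the X_t p with t ≠ 0
            set S' : Set P := (fun t : Fin n → ℤ => K.X t p) '' {t | t ≠ 0} with hS'_def
            have hsub : (⨆ i : Fin n, LinearMap.range (K.pd i)) ≤ Submodule.span ℂ S' := by
              refine iSup_le fun i => ?_
              rintro x ⟨z, rfl⟩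
              have hzV : z ∈ V := hVtop ▸ Submodule.mem_top
              rw [hV_def] at hzV
              induction hzV using Submodule.span_induction with
              | mem x hx =>
                obtain ⟨t, rfl⟩ := hx
                have : K.pd i (K.X t p) = (t i : ℂ) • K.X t p := by
                  rw [WeylModule.pd_X_apply, hpdp, map_zero, zero_add]
                rw [this]
                by_cases ht : t = 0
                · subst ht; simp
                · exact Submodule.smul_mem _ _ (Submodule.subset_span ⟨t, ht, rfl⟩)
              | zero => simp
              | add a b _ _ ha hb => rw [map_add]; exact Submodule.add_mem _ ha hb
              | smul c a _ ha => rw [map_smul]; exact Submodule.smul_mem _ _ ha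
            have hpS' : p ∈ Submodule.span ℂ S' := hsub (hsup ▸ Submodule.mem_top)
            obtain ⟨k, c, g, hsum⟩ := Submodule.mem_span_set'.1 hpS'
            have hg : ∀ i : Fin k, ∃ t : Fin n → ℤ, t ≠ 0 ∧ K.X t p = (g i : P) := by
              intro i
              rcases (g i).2 with ⟨t, ht, hxt⟩
              exact ⟨t, ht, hxt⟩
            choose tt htt hXtt using hg
            have main : ∀ (k : ℕ) (c : Fin k → ℂ) (tt : Fin k → Fin n → ℤ),
                (∀ i, tt i ≠ 0) → (∑ i, c i • K.X (tt i) p) = p → False := by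
              intro k
              induction k with
              | zero =>
                intro c tt _ hsum
                simp at hsum
                exact hp0 hsum.symm
              | succ k ih =>
                intro c tt hne hsum
                obtain ⟨j, hj⟩ := Function.ne_iff.1 (hne 0)
                have hjC : ((tt 0 j : ℤ) : ℂ) ≠ 0 := by exact_mod_cast hj
                have hXe : ∀ t : Fin n → ℤ, K.pd j (K.X t p) = (t j : ℂ) • K.X t p := by
                  intro t
                  rw [WeylModule.pd_X_apply, hpdp, map_zero, zero_add]
                have happ := congrArg (fun z => K.pd j z - ((tt 0 j : ℤ) : ℂ) • z) hsum
                simp only [map_sum, map_smul, hXe] at happ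
                -- happ : ∑ i, c i • (tt i j) • X_{tt i} p - t0j • ∑ i, c i • X_{tt i} p = pd j p - t0j • p
                rw [hpdp j, Finset.smul_sum, ← Finset.sum_sub_distrib, zero_sub] at happ
                have happ2 : ∑ i, ((c i * ((tt i j : ℂ) - (tt 0 j : ℂ)))) • K.X (tt i) p
                    = -(((tt 0 j : ℤ) : ℂ) • p) := by
                  rw [← happ]
                  refine Finset.sum_congr rfl fun i _ => ?_
                  rw [smul_smul, smul_smul, ← sub_smul]
                  congr 1
                  ring
                rw [Fin.sum_univ_succ] at happ2
                have hz0 : (c 0 * ((tt 0 j : ℂ) - (tt 0 j : ℂ))) • K.X (tt 0) p = 0 := by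
                  simp
                rw [hz0, zero_add] at happ2
                refine ih (fun i => -(((tt 0 j : ℤ) : ℂ))⁻¹ * (c i.succ * ((tt i.succ j : ℂ) - (tt 0 j : ℂ))))
                  (fun i => tt i.succ) (fun i => hne i.succ) ?_
                have hfac : ∑ i : Fin k, (-(((tt 0 j : ℤ) : ℂ))⁻¹ *
                      (c i.succ * ((tt i.succ j : ℂ) - (tt 0 j : ℂ)))) • K.X (tt i.succ) p
                    = -(((tt 0 j : ℤ) : ℂ))⁻¹ •
                      ∑ i : Fin k, (c i.succ * ((tt i.succ j : ℂ) - (tt 0 j : ℂ))) •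
                        K.X (tt i.succ) p := by
                  rw [Finset.smul_sum]
                  exact Finset.sum_congr rfl fun i _ => (smul_smul _ _ _).symm
                rw [hfac, happ2, neg_smul, smul_neg, neg_neg, smul_smul,
                  inv_mul_cancel₀ hjC, one_smul]
            have hsum2 : ∑ i : Fin k, c i • K.X (tt i) p = p :=
              (Finset.sum_congr rfl fun i _ => by rw [hXtt i]).trans hsum
            exact (main k c tt htt hsum2).elim
        -- transfer M = ⊤ back to N = ⊤
        rw [eq_top_iff]
        intro z _
        have : e z ∈ M := hMtop ▸ Submodule.mem_top
        obtain ⟨x, hx, hex⟩ := this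
        have : x = z := e.injective hex
        exact this ▸ hx
  · rintro ⟨hbt, hirr⟩
    by_contra hsup
    set W : Submodule ℂ P := ⨆ i : Fin n, LinearMap.range (K.pd i) with hW_def
    have hDW : ∀ (u : Fin n → ℂ) (r : Fin n → ℤ), pairing u r = 0 →
        ∀ p : P, K.D u r p ∈ W := by
      intro u r hur p
      rw [WeylModule.D_apply]
      have e1 : K.X r (∑ i, u i • K.pd i p)
          = ∑ i, u i • K.pd i (K.X r p) - pairing u r • K.X r p := by
        rw [map_sum]
        have e2 : ∀ i, K.X r (u i • K.pd i p)
            = u i • K.pd i (K.X r p) - (u i * (r i : ℂ)) • K.X r p := by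
          intro i
          rw [map_smul]
          rw [show K.X r (K.pd i p) = K.pd i (K.X r p) - (r i : ℂ) • K.X r p by
            rw [WeylModule.pd_X_apply]; abel]
          rw [smul_sub, smul_smul]
        rw [Finset.sum_congr rfl fun i _ => e2 i, Finset.sum_sub_distrib, ← Finset.sum_smul]
        rfl
      rw [e1, hur, zero_smul, sub_zero]
      refine Submodule.sum_mem _ fun i _ => Submodule.smul_mem _ _ ?_
      exact le_iSup (fun i => LinearMap.range (K.pd i)) i ⟨K.X r p, rfl⟩
    set N : Submodule ℂ (P ⊗[ℂ] ℂ) := W.comap e.toLinearMap with hN_def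
    have hNinv : ∀ (u : Fin n → ℂ) (r : Fin n → ℤ), pairing u r = 0 →
        N.map (TensorProduct.map (K.D u r) LinearMap.id) ≤ N := by
      rintro u r hur x ⟨z, _, rfl⟩
      show e (TensorProduct.map (K.D u r) LinearMap.id z) ∈ W
      rw [rid_map_natural]
      exact hDW u r hur _
    rcases hirr N hNinv with h | h
    · -- then W = ⊥, pd i = 0, contradiction
      have hWbot : W = ⊥ := by
        rw [eq_bot_iff]
        intro p hp
        have : e.symm p ∈ N := by
          show e (e.symm p) ∈ W
          rwa [LinearEquiv.apply_symm_apply]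
        rw [h, Submodule.mem_bot] at this
        have := congrArg e this
        rwa [LinearEquiv.apply_symm_apply, map_zero, Submodule.mem_bot] at *
        -- fallback
      have hpd0 : ∀ i, K.pd i = 0 := by
        intro i
        ext x
        have : K.pd i x ∈ W := le_iSup (fun i => LinearMap.range (K.pd i)) i ⟨x, rfl⟩
        rw [hWbot, Submodule.mem_bot] at this
        simpa using this
      -- pd_X relation forces X r = 0 for r = single i 1, contradiction with invertibility
      have i0 : Fin n := ⟨0, lt_of_lt_of_le two_pos hn⟩
      set r : Fin n → ℤ := Pi.single i0 1 with hr_def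
      have hXr : K.X r = 0 := by
        have h := K.pd_X i0 r
        rw [hpd0 i0] at h
        have hri : ((r i0 : ℤ) : ℂ) = 1 := by rw [hr_def]; simp
        rw [hri] at h
        simp at h
        exact h.symm
      have hone : (1 : Module.End ℂ P) = 0 := by
        rw [← K.X_zero, show (0 : Fin n → ℤ) = r + (-r) by abel, K.X_add, hXr]
        simp
      obtain ⟨x, hx⟩ := exists_ne (0 : P)
      apply hx
      have := congrArg (fun f : Module.End ℂ P => f x) hone
      simpa using this
    · -- N = ⊤ forces W = ⊤, contradiction
      apply hsup
      rw [eq_top_iff]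
      intro p _
      have : e.symm p ∈ N := h ▸ Submodule.mem_top
      have h2 : e (e.symm p) ∈ W := this
      rwa [LinearEquiv.apply_symm_apply] at h2
end
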